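/- arXiv:2112.02061 — 5 statements merged into one kernel-verified Lean document; each statement's English description precedes it below -/
import Mathlib

section
/- Let K be a field of characteristic 0 and let C ∈ K[[x]] be a formal power series with zero constant term whose coefficient of x is nonzero (so that the compositional inverse C^{⟨−1⟩} exists). Then for all positive integers k and n, n·[x^n]((C^{⟨−1⟩}(x))^k) = k·[x^{n−k}]((x/C(x))^n), where x/C(x) denotes u(x)^{−1} for the unit u ∈ K[[x]] with C(x) = x·u(x). -/
open PowerSeries

/-- Composition `f ∘ g` of formal power series, intended for `g` with zero
constant term (in which case `coeff n (g ^ k) = 0` for `k > n`, so the finite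
sum below computes the usual substitution of `g` into `f`). -/
noncomputable def pscomp {R : Type*} [CommRing R] (f g : PowerSeries R) : PowerSeries R :=
  PowerSeries.mk fun n => ∑ k ∈ Finset.range (n + 1), (coeff k f) * (coeff n (g ^ k))

namespace LagrangeAux

open Finset Polynomial

variable {R : Type*} [CommRing R]

theorem coeff_pow_eq_zero {g : PowerSeries R} (hg : constantCoeff g = 0)
    {n k : ℕ} (h : n < k) : coeff n (g ^ k) = 0 := by
  obtain ⟨h', hh⟩ := pow_dvd_pow_of_dvd (PowerSeries.X_dvd_iff.mpr hg) k
  rw [hh, PowerSeries.coeff_X_pow_mul', if_neg (by omega)]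

theorem coeff_pscomp (f g : PowerSeries R) (n : ℕ) :
    coeff n (pscomp f g) = ∑ j ∈ Finset.range (n + 1), coeff j f * coeff n (g ^ j) := by
  simp [pscomp]

theorem coeff_pscomp' {g : PowerSeries R} (hg : constantCoeff g = 0) (f : PowerSeries R)
    {n N : ℕ} (hn : n < N) :
    coeff n (pscomp f g) = ∑ j ∈ Finset.range N, coeff j f * coeff n (g ^ j) := by
  rw [coeff_pscomp]
  apply Finset.sum_subset
  · intro x hx; simp only [Finset.mem_range] at *; omega
  · intro x hx hx'
    simp only [Finset.mem_range] at hx hx'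
    rw [coeff_pow_eq_zero hg (by omega), mul_zero]

theorem coeff_aeval {g : PowerSeries R} (hg : constantCoeff g = 0) (P : R[X]) (n : ℕ) :
    coeff n (Polynomial.aeval (R := R) g P)
      = ∑ j ∈ Finset.range (n + 1), P.coeff j * coeff n (g ^ j) := by
  rw [Polynomial.aeval_eq_sum_range' (n := max P.natDegree n + 1)
      (Nat.lt_succ_of_le (le_max_left _ _)) g, map_sum]
  have h1 : ∀ j, coeff n (P.coeff j • g ^ j) = P.coeff j * coeff n (g ^ j) := by
    intro j; rw [PowerSeries.coeff_smul, smul_eq_mul]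
  simp_rw [h1]
  rw [eq_comm]
  apply Finset.sum_subset
  · intro x hx; simp only [Finset.mem_range] at *; omega
  · intro x hx hx'
    simp only [Finset.mem_range] at hx hx'
    rw [coeff_pow_eq_zero hg (by omega), mul_zero]

theorem coeff_pscomp_aeval {g : PowerSeries R} (hg : constantCoeff g = 0) (f : PowerSeries R)
    {n N : ℕ} (hn : n < N) :
    coeff n (pscomp f g) = coeff n (Polynomial.aeval (R := R) g (trunc N f)) := by
  rw [coeff_aeval hg, coeff_pscomp]
  refine Finset.sum_congr rfl fun j hj => ?_
  rw [PowerSeries.coeff_trunc, if_pos (by simp only [Finset.mem_range] at hj; omega)]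

theorem pscomp_one {g : PowerSeries R} (hg : constantCoeff g = 0) :
    pscomp (1 : PowerSeries R) g = 1 := by
  ext n
  rw [coeff_pscomp, Finset.sum_eq_single 0]
  · simp
  · intro j hj hj0
    rw [PowerSeries.coeff_one, if_neg hj0, zero_mul]
  · intro h; simp at h

theorem pscomp_mul {g : PowerSeries R} (hg : constantCoeff g = 0) (f₁ f₂ : PowerSeries R) :
    pscomp (f₁ * f₂) g = pscomp f₁ g * pscomp f₂ g := by
  ext n
  have step1 : coeff n (pscomp (f₁ * f₂) g)
      = coeff n (Polynomial.aeval (R := R) g (trunc (n+1) f₁ * trunc (n+1) f₂)) := by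
    rw [coeff_pscomp, coeff_aeval hg]
    refine Finset.sum_congr rfl fun j hj => ?_
    simp only [Finset.mem_range] at hj
    congr 1
    have := PowerSeries.coeff_mul_eq_coeff_trunc_mul_trunc₂ (n := j) (a := n+1) (b := n+1)
      f₁ f₂ (by omega) (by omega)
    rw [← Polynomial.coe_mul, Polynomial.coeff_coe] at this
    rw [this]
  rw [step1, map_mul, PowerSeries.coeff_mul, PowerSeries.coeff_mul]
  refine Finset.sum_congr rfl fun ab hab => ?_
  rw [HasAntidiagonal.mem_antidiagonal] at hab
  rw [← coeff_pscomp_aeval hg f₁ (show ab.1 < n+1 by omega),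
    ← coeff_pscomp_aeval hg f₂ (show ab.2 < n+1 by omega)]

theorem pscomp_pow {g : PowerSeries R} (hg : constantCoeff g = 0) (f : PowerSeries R) (k : ℕ) :
    pscomp (f ^ k) g = (pscomp f g) ^ k := by
  induction k with
  | zero => simpa using pscomp_one hg
  | succ k ih => rw [pow_succ, pow_succ, pscomp_mul hg, ih]

theorem derivative_pscomp {g : PowerSeries R} (hg : constantCoeff g = 0) (f : PowerSeries R) :
    d⁄dX R (pscomp f g) = pscomp (d⁄dX R f) g * d⁄dX R g := by
  ext n
  rw [PowerSeries.coeff_derivative, coeff_pscomp_aeval hg f (show n+1 < n+3 by omega),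
    ← PowerSeries.coeff_derivative, Derivation.map_aeval, smul_eq_mul,
    PowerSeries.coeff_mul, PowerSeries.coeff_mul]
  refine Finset.sum_congr rfl fun ab hab => ?_
  rw [HasAntidiagonal.mem_antidiagonal] at hab
  congr 1
  have h2 : Polynomial.derivative (trunc (n+3) f) = trunc (n+2) (d⁄dX R f) := by
    rw [PowerSeries.trunc_derivative]
  rw [h2, ← coeff_pscomp_aeval hg _ (show ab.1 < n+2 by omega)]

theorem coeff_pscomp_mul {g : PowerSeries R} (hg : constantCoeff g = 0)
    (P w : PowerSeries R) (n : ℕ) :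
    coeff n (pscomp P g * w)
      = ∑ j ∈ Finset.range (n + 1), coeff j P * coeff n (g ^ j * w) := by
  rw [PowerSeries.coeff_mul]
  have step1 : ∀ ab ∈ antidiagonal n,
      coeff ab.1 (pscomp P g) * coeff ab.2 w
        = ∑ j ∈ Finset.range (n+1), coeff j P * (coeff ab.1 (g ^ j) * coeff ab.2 w) := by
    intro ab hab
    rw [HasAntidiagonal.mem_antidiagonal] at hab
    rw [coeff_pscomp' hg P (show ab.1 < n+1 by omega), Finset.sum_mul]
    exact Finset.sum_congr rfl fun j _ => mul_assoc _ _ _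
  rw [Finset.sum_congr rfl step1, Finset.sum_comm]
  refine Finset.sum_congr rfl fun j _ => ?_
  rw [PowerSeries.coeff_mul, Finset.mul_sum]

end LagrangeAux

namespace LagrangeAux

variable {K : Type*} [Field K] [CharZero K]

/-- The residue computation: `[x^s] (u⁻¹^(s+1) * C') = δ_{s,0}` for `C = X*u`. -/
theorem residue_unit {C u : PowerSeries K} (hu : C = X * u)
    (hcc : constantCoeff u ≠ 0) (s : ℕ) :
    coeff s ((u⁻¹) ^ (s + 1) * d⁄dX K C) = if s = 0 then 1 else 0 := by
  have huv : u * u⁻¹ = 1 := PowerSeries.mul_inv_cancel u hcc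
  set v := u⁻¹ with hv
  have hC' : d⁄dX K C = X * d⁄dX K u + u := by
    rw [hu, Derivation.leibniz, smul_eq_mul, smul_eq_mul, PowerSeries.derivative_X, mul_one,
      add_comm]
  cases s with
  | zero =>
    simp only [if_pos rfl]
    rw [pow_one, hC', PowerSeries.coeff_zero_eq_constantCoeff, map_mul, map_add, map_mul,
      PowerSeries.constantCoeff_X, zero_mul, zero_add]
    have : constantCoeff u * constantCoeff v = 1 := by
      rw [← map_mul, huv, map_one]
    rw [mul_comm] at this
    exact this
  | succ t =>
    rw [if_neg (Nat.succ_ne_zero t)]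
    have hvu : v ^ (t + 2) * u = v ^ (t + 1) := by
      rw [pow_succ, mul_assoc, mul_comm v u, huv, mul_one]
    have hsplit : v ^ (t + 2) * d⁄dX K C = X * (v ^ (t + 2) * d⁄dX K u) + v ^ (t + 1) := by
      rw [hC', mul_add, hvu]
      ring
    rw [hsplit, map_add, PowerSeries.coeff_succ_X_mul]
    set c := coeff (t + 1) (v ^ (t + 1)) with hc
    have hDv : d⁄dX K v = -(v ^ 2) * d⁄dX K u := by
      have := PowerSeries.derivative_inv' (R := K) u
      rw [hv, this]
    have hpow : d⁄dX K (v ^ (t + 1)) = (t + 1) • (v ^ t * d⁄dX K v) := by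
      have := Derivation.leibniz_pow (d⁄dX K) (a := v) (t + 1)
      simpa [smul_eq_mul] using this
    have h1 : coeff t (d⁄dX K (v ^ (t + 1))) = c * (t + 1) := by
      rw [PowerSeries.coeff_derivative, hc]
    have h2 : coeff t (v ^ t * d⁄dX K v) = c := by
      have h3 : ((t + 1 : ℕ) : K) * coeff t (v ^ t * d⁄dX K v) = ((t + 1 : ℕ) : K) * c := by
        have := h1
        rw [hpow, map_nsmul, nsmul_eq_mul] at this
        rw [this]; push_cast; ring
      have hne : ((t + 1 : ℕ) : K) ≠ 0 := Nat.cast_ne_zero.mpr (Nat.succ_ne_zero t)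
      exact mul_left_cancel₀ hne h3
    have h4 : v ^ (t + 2) * d⁄dX K u = -(v ^ t * d⁄dX K v) := by
      rw [hDv]; ring
    rw [h4, map_neg, h2]
    simp [hc]

/-- Key residue lemma: `res(P x^{-(m+1)}) = res((P∘C) C^{-(m+1)} C')`. -/
theorem key {C u : PowerSeries K} (hu : C = X * u) (hcc : constantCoeff u ≠ 0)
    (P : PowerSeries K) (m : ℕ) :
    coeff m P = coeff m (pscomp P C * ((u⁻¹) ^ (m + 1) * d⁄dX K C)) := by
  have huv : u * u⁻¹ = 1 := PowerSeries.mul_inv_cancel u hcc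
  have hC0 : constantCoeff C = 0 := by simp [hu]
  set v := u⁻¹ with hv
  rw [coeff_pscomp_mul hC0]
  have hterm : ∀ j ∈ Finset.range (m + 1),
      coeff j P * coeff m (C ^ j * (v ^ (m + 1) * d⁄dX K C))
        = coeff j P * (if j = m then 1 else 0) := by
    intro j hj
    simp only [Finset.mem_range] at hj
    congr 1
    have hCj : C ^ j * (v ^ (m + 1) * d⁄dX K C)
        = X ^ j * (v ^ (m - j + 1) * d⁄dX K C) := by
      have hj' : j + (m - j + 1) = m + 1 := by omega
      calc C ^ j * (v ^ (m + 1) * d⁄dX K C)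
          = X ^ j * ((u ^ j * v ^ j) * (v ^ (m - j + 1) * d⁄dX K C)) := by
            rw [hu, mul_pow, ← hj', pow_add]; ring
        _ = X ^ j * (v ^ (m - j + 1) * d⁄dX K C) := by
            rw [← mul_pow, huv, one_pow, one_mul]
    rw [hCj, PowerSeries.coeff_X_pow_mul', if_pos (by omega),
      residue_unit hu hcc (m - j)]
    by_cases h : j = m
    · rw [if_pos (by omega), if_pos h]
    · rw [if_neg (by omega), if_neg h]
  rw [Finset.sum_congr rfl hterm]
  simp only [mul_ite, mul_one, mul_zero]
  simp

end LagrangeAux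


/-- **Lagrange inversion formula.**  Let `K` be a field of characteristic `0`
and `C ∈ K[[x]]` with zero constant term and nonzero coefficient of `x`.
Write `C = X * u` (so `x / C(x) = u⁻¹`) and let `D = C^{⟨−1⟩}` be the
compositional inverse of `C`.  Then for positive integers `k, n`,
`n·[x^n](D^k) = k·[x^{n−k}]((x/C)^n)`, where the coefficient `[x^{n−k}]` is
interpreted as `0` when `n − k < 0`. -/
theorem lagrange_inversion {K : Type*} [Field K] [CharZero K]
    (C D u : PowerSeries K)
    (hC0 : constantCoeff C = 0) (hC1 : coeff 1 C ≠ 0)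
    (hu : C = X * u)
    (hD0 : constantCoeff D = 0)
    (hCD : pscomp C D = X) (hDC : pscomp D C = X)
    (k n : ℕ) (hk : 0 < k) (hn : 0 < n) :
    (n : K) * coeff n (D ^ k) =
      (k : K) * (if k ≤ n then coeff (n - k) ((u⁻¹) ^ n) else 0) := by
  have hcc : constantCoeff u ≠ 0 := by
    intro h
    apply hC1
    rw [hu, show (1 : ℕ) = 0 + 1 from rfl, PowerSeries.coeff_succ_X_mul,
      PowerSeries.coeff_zero_eq_constantCoeff, h]
  obtain ⟨m, rfl⟩ : ∃ m, n = m + 1 := ⟨n - 1, by omega⟩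
  obtain ⟨j, rfl⟩ : ∃ j, k = j + 1 := ⟨k - 1, by omega⟩
  have hkey := LagrangeAux.key hu hcc (d⁄dX K (D ^ (j + 1))) m
  have hXpow : d⁄dX K ((X : PowerSeries K) ^ (j + 1))
      = (j + 1) • ((X : PowerSeries K) ^ j) := by
    have := Derivation.leibniz_pow (d⁄dX K) (a := (X : PowerSeries K)) (j + 1)
    simpa [smul_eq_mul] using this
  have hchain : pscomp (d⁄dX K (D ^ (j + 1))) C * d⁄dX K C
      = (j + 1) • ((X : PowerSeries K) ^ j) := by
    rw [← LagrangeAux.derivative_pscomp hC0, LagrangeAux.pscomp_pow hC0, hDC, hXpow]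
  have hre : pscomp (d⁄dX K (D ^ (j + 1))) C * ((u⁻¹) ^ (m + 1) * d⁄dX K C)
      = ((j + 1) • ((X : PowerSeries K) ^ j)) * (u⁻¹) ^ (m + 1) := by
    rw [← hchain]; ring
  rw [hre] at hkey
  have h2 : coeff m (((j + 1) • ((X : PowerSeries K) ^ j)) * (u⁻¹) ^ (m + 1))
      = ((j + 1 : ℕ) : K) * (if j ≤ m then coeff (m - j) ((u⁻¹) ^ (m + 1)) else 0) := by
    rw [smul_mul_assoc, map_nsmul, PowerSeries.coeff_X_pow_mul', nsmul_eq_mul]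
  rw [h2, PowerSeries.coeff_derivative] at hkey
  rw [show (m + 1) - (j + 1) = m - j from by omega]
  simp only [Nat.add_le_add_iff_right]
  push_cast at hkey ⊢
  rw [mul_comm]
  exact hkey
end

section
/- Let K be a field and f: ℤ⁺ → K. Define h: ℤ⁺ → K by h(n) = Σ_{π ∈ NC_n} f(#B₁)·f(#B₂)···f(#B_ℓ), the sum over all noncrossing partitions π = {B₁,…,B_ℓ} of [n], where #B denotes the cardinality of the block B. Set F(x) = 1 + Σ_{n≥1} f(n)xⁿ and H(x) = 1 + Σ_{n≥1} h(n)xⁿ in K[[x]]. Then x·H(x) is the compositional inverse of x/F(x) (a well-defined power series with zero constant term and invertible linear coefficient, since F is a unit of K[[x]]). -/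
open PowerSeries

/-- A collection of blocks `P` is a noncrossing partition of `[n] = Fin n`:
the blocks are nonempty, every element lies in exactly one block, and there
are no crossing indices `a < b < c < d` with `a, c` in one block and `b, d`
in a different block. -/
def IsNCPartition {n : ℕ} (P : Finset (Finset (Fin n))) : Prop :=
  (∀ B ∈ P, B.Nonempty) ∧ (∀ i : Fin n, ∃! B, B ∈ P ∧ i ∈ B) ∧
  (∀ a b c d : Fin n, a < b → b < c → c < d →
    ∀ B ∈ P, ∀ B' ∈ P, a ∈ B → c ∈ B → b ∈ B' → d ∈ B' → B = B')

open scoped Classical in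
/-- `h(n) = Σ_{π ∈ NC_n} f(#B₁)···f(#B_ℓ)`, the sum over all noncrossing
partitions of `[n]` of the product of `f` evaluated at the block sizes. -/
noncomputable def ncSum {K : Type*} [Field K] (f : ℕ → K) (n : ℕ) : K :=
  ∑ P ∈ Finset.univ.filter (fun P : Finset (Finset (Fin n)) => IsNCPartition P),
    ∏ B ∈ P, f B.card


open Finset

section PSLemma
variable {R : Type*} [CommRing R] {a g h : PowerSeries R}

variable {R : Type*} [CommRing R] {a : PowerSeries R}


lemma coeff_pscomp (f g : PowerSeries R) (n : ℕ) :
    coeff n (pscomp f g) = ∑ k ∈ Finset.range (n + 1), (coeff k f) * (coeff n (g ^ k)) :=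
  coeff_mk _ _

lemma coeff_pow_eq_zero (ha : constantCoeff a = 0) :
    ∀ {k n : ℕ}, n < k → (coeff n) (a ^ k) = 0 := by
  intro k
  induction k with
  | zero => intro n h; exact absurd h (Nat.not_lt_zero n)
  | succ k ih =>
    intro n h
    rw [pow_succ, coeff_mul]
    apply Finset.sum_eq_zero
    rintro ⟨i, j⟩ hij
    rw [Finset.HasAntidiagonal.mem_antidiagonal] at hij
    rcases Nat.eq_zero_or_pos j with hj | hj
    · subst hj
      simp [coeff_zero_eq_constantCoeff, ha]
    · have : i < k := by omega
      rw [ih this, zero_mul]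

lemma pscomp_mul (ha : constantCoeff a = 0) (f g : PowerSeries R) :
    pscomp (f * g) a = pscomp f a * pscomp g a := by
  ext n
  rw [coeff_mul, coeff_pscomp]
  have key : ∀ p q : ℕ, p + q = n →
      coeff p (pscomp f a) * coeff q (pscomp g a)
      = ∑ i ∈ Finset.range (n+1), ∑ j ∈ Finset.range (n+1),
          (coeff i f * coeff j g) * (coeff p (a ^ i) * coeff q (a ^ j)) := by
    intro p q hpq
    rw [coeff_pscomp, coeff_pscomp]
    have e1 : ∑ k ∈ Finset.range (p + 1), coeff k f * coeff p (a ^ k)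
        = ∑ k ∈ Finset.range (n + 1), coeff k f * coeff p (a ^ k) := by
      apply Finset.sum_subset (Finset.range_subset_range.2 (by omega))
      intro k _ hk
      rw [Finset.mem_range, not_lt] at hk
      rw [coeff_pow_eq_zero ha (by omega), mul_zero]
    have e2 : ∑ k ∈ Finset.range (q + 1), coeff k g * coeff q (a ^ k)
        = ∑ k ∈ Finset.range (n + 1), coeff k g * coeff q (a ^ k) := by
      apply Finset.sum_subset (Finset.range_subset_range.2 (by omega))
      intro k _ hk
      rw [Finset.mem_range, not_lt] at hk
      rw [coeff_pow_eq_zero ha (by omega), mul_zero]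
    rw [e1, e2, Finset.sum_mul_sum]
    apply Finset.sum_congr rfl; intro i _
    apply Finset.sum_congr rfl; intro j _
    ring
  rw [Finset.sum_congr rfl (fun p hp => key p.1 p.2 (Finset.HasAntidiagonal.mem_antidiagonal.1 hp))]
  rw [Finset.sum_comm]
  have swap2 : ∀ i : ℕ, ∑ p ∈ antidiagonal n, ∑ j ∈ Finset.range (n+1),
        (coeff i f * coeff j g) * (coeff p.1 (a ^ i) * coeff p.2 (a ^ j))
      = ∑ j ∈ Finset.range (n+1), (coeff i f * coeff j g) * coeff n (a ^ (i + j)) := by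
    intro i
    rw [Finset.sum_comm]
    apply Finset.sum_congr rfl; intro j _
    rw [pow_add, coeff_mul, Finset.mul_sum]
  rw [Finset.sum_congr rfl (fun i _ => swap2 i)]
  -- now RHS is ∑ i ∈ range (n+1), ∑ j ∈ range (n+1), (f_i g_j) * coeff n a^(i+j)
  -- LHS is ∑ k ∈ range (n+1), coeff k (f*g) * coeff n a^k
  have lhs_eq : ∀ k : ℕ, coeff k (f * g) * coeff n (a ^ k)
      = ∑ p ∈ antidiagonal k, (coeff p.1 f * coeff p.2 g) * coeff n (a ^ (p.1 + p.2)) := by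
    intro k
    rw [coeff_mul, Finset.sum_mul]
    apply Finset.sum_congr rfl
    intro p hp
    rw [Finset.HasAntidiagonal.mem_antidiagonal.1 hp]
  rw [Finset.sum_congr rfl (fun k _ => lhs_eq k)]
  -- both now sums of φ (i,j) := (f_i g_j) * coeff n a^(i+j)
  have hext : ∑ k ∈ Finset.range (n+1), ∑ p ∈ antidiagonal k,
        (coeff p.1 f * coeff p.2 g) * coeff n (a ^ (p.1 + p.2))
      = ∑ k ∈ Finset.range (2*n+1), ∑ p ∈ antidiagonal k,
        (coeff p.1 f * coeff p.2 g) * coeff n (a ^ (p.1 + p.2)) := by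
    apply Finset.sum_subset (Finset.range_subset_range.2 (by omega))
    intro k _ hk
    rw [Finset.mem_range, not_lt] at hk
    apply Finset.sum_eq_zero
    intro p hp
    rw [coeff_pow_eq_zero ha (by rw [Finset.HasAntidiagonal.mem_antidiagonal.1 hp]; omega), mul_zero]
  rw [hext]
  have hfib := Finset.sum_fiberwise_of_maps_to (g := fun p : ℕ × ℕ => p.1 + p.2)
    (s := Finset.range (n+1) ×ˢ Finset.range (n+1)) (t := Finset.range (2*n+1))
    (fun p hp => by
      simp only [Finset.mem_product, Finset.mem_range] at hp
      show p.1 + p.2 ∈ Finset.range (2*n+1)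
      rw [Finset.mem_range]; omega)
    (fun p => (coeff p.1 f * coeff p.2 g) * coeff n (a ^ (p.1 + p.2)))
  rw [← Finset.sum_product'] 
  rw [← hfib]
  apply Finset.sum_congr rfl
  intro k hk
  rw [Finset.mem_range] at hk
  rcases le_or_gt k n with hkn | hkn
  · apply Finset.sum_congr _ (fun _ _ => rfl)
    ext p
    simp only [Finset.mem_filter, Finset.mem_product, Finset.mem_range, Finset.HasAntidiagonal.mem_antidiagonal]
    omega
  · rw [Finset.sum_eq_zero, Finset.sum_eq_zero]
    · intro p hp
      simp only [Finset.mem_filter] at hp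
      rw [hp.2, coeff_pow_eq_zero ha (by omega), mul_zero]
    · intro p hp
      rw [coeff_pow_eq_zero ha (by rw [Finset.HasAntidiagonal.mem_antidiagonal.1 hp]; omega), mul_zero]
lemma pscomp_sub (f g a : PowerSeries R) :
    pscomp (f - g) a = pscomp f a - pscomp g a := by
  ext n
  simp only [coeff_pscomp, map_sub, sub_mul, Finset.sum_sub_distrib]

lemma pscomp_one (a : PowerSeries R) : pscomp 1 a = 1 := by
  ext n
  rw [coeff_pscomp]
  rcases Nat.eq_zero_or_pos n with hn | hn
  · subst hn; simp
  · rw [Finset.sum_eq_single 0]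
    · simp [coeff_one, hn.ne']
    · intro k _ hk
      rw [coeff_one, if_neg hk, zero_mul]
    · simp
  
lemma pscomp_X (ha : constantCoeff a = 0) : pscomp X a = a := by
  ext n
  rw [coeff_pscomp]
  rcases Nat.eq_zero_or_pos n with hn | hn
  · subst hn; simpa [coeff_zero_eq_constantCoeff, ha] using ha.symm
  · rw [Finset.sum_eq_single 1]
    · simp
    · intro k _ hk
      rw [coeff_X, if_neg hk, zero_mul]
    · intro hmem
      exfalso; apply hmem; rw [Finset.mem_range]; omega

lemma pscomp_X_right (f : PowerSeries R) : pscomp f X = f := by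
  ext n
  rw [coeff_pscomp]
  rw [Finset.sum_eq_single n]
  · rw [X_pow_eq, coeff_monomial_same, mul_one]
  · intro k hk hkn
    rw [X_pow_eq, coeff_monomial, if_neg (fun h => hkn h.symm), mul_zero]
  · intro hmem; exfalso; apply hmem; simp

lemma constantCoeff_pscomp (ha : constantCoeff a = 0) (f : PowerSeries R) :
    constantCoeff (pscomp f a) = coeff 0 f := by
  rw [← coeff_zero_eq_constantCoeff, coeff_pscomp]
  simp


variable {R : Type*} [CommRing R] {a g h : PowerSeries R}




lemma pscomp_pow (ha : constantCoeff a = 0) (g : PowerSeries R) (k : ℕ) :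
    pscomp (g ^ k) a = (pscomp g a) ^ k := by
  induction k with
  | zero => simpa using pscomp_one a
  | succ k ih => rw [pow_succ, pow_succ, pscomp_mul ha, ih]

lemma pscomp_assoc (hg : constantCoeff g = 0) (hh : constantCoeff h = 0) (f : PowerSeries R) :
    pscomp (pscomp f g) h = pscomp f (pscomp g h) := by
  ext n
  rw [coeff_pscomp, coeff_pscomp]
  have e1 : ∀ m : ℕ, m < n + 1 → coeff m (pscomp f g) * coeff n (h ^ m)
      = ∑ k ∈ Finset.range (n+1), coeff k f * (coeff m (g ^ k) * coeff n (h ^ m)) := by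
    intro m _
    rw [coeff_pscomp]
    have : ∑ k ∈ Finset.range (m + 1), coeff k f * coeff m (g ^ k)
        = ∑ k ∈ Finset.range (n + 1), coeff k f * coeff m (g ^ k) := by
      apply Finset.sum_subset (Finset.range_subset_range.2 (by omega))
      intro k _ hk
      rw [Finset.mem_range, not_lt] at hk
      rw [coeff_pow_eq_zero hg (by omega), mul_zero]
    rw [this, Finset.sum_mul]
    exact Finset.sum_congr rfl fun k _ => by ring
  rw [Finset.sum_congr rfl (fun m hm => e1 m (Finset.mem_range.1 hm))]
  rw [Finset.sum_comm]
  apply Finset.sum_congr rfl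
  intro k _
  rw [← Finset.mul_sum, ← pscomp_pow hh g k, coeff_pscomp]

lemma pscomp_cancel (ha : constantCoeff a = 0) (ha1 : coeff 1 a = 1) {d : PowerSeries R}
    (hd : pscomp d a = 0) : d = 0 := by
  have hself : ∀ m : ℕ, coeff m (a ^ m) = 1 := by
    intro m
    induction m with
    | zero => simp
    | succ m ih =>
      rw [pow_succ, coeff_mul, Finset.sum_eq_single (m, 1)]
      · rw [ih, one_mul, ha1]
      · rintro ⟨i, j⟩ hij hne
        rw [Finset.HasAntidiagonal.mem_antidiagonal] at hij
        rcases Nat.eq_zero_or_pos j with hj | hj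
        · subst hj; simp [coeff_zero_eq_constantCoeff, ha]
        · have : j = 1 ∨ 2 ≤ j := by omega
          rcases this with hj1 | hj2
          · exfalso; apply hne; subst hj1; simp; omega
          · rw [coeff_pow_eq_zero ha (show i < m by omega), zero_mul]
      · intro hmem; exfalso; apply hmem; rw [Finset.HasAntidiagonal.mem_antidiagonal]
  ext m
  induction m using Nat.strong_induction_on with
  | _ m ih =>
    have h0 : coeff m (pscomp d a) = 0 := by rw [hd]; simp
    rw [coeff_pscomp, Finset.sum_eq_single m] at h0
    · rw [hself] at h0; simpa using h0
    · intro k hk hkm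
      rw [Finset.mem_range] at hk
      have := ih k (by omega)
      simp only [map_zero] at this ⊢
      rw [this, zero_mul]
    · intro hmem; exfalso; apply hmem; simp

end PSLemma

open scoped Classical



/-- noncrossing partial partition of the set `S`. -/
def NCFamOn {N : ℕ} (S : Finset (Fin N)) (Q : Finset (Finset (Fin N))) : Prop :=
  (∀ B ∈ Q, B.Nonempty) ∧ (∀ i ∈ S, ∃! B, B ∈ Q ∧ i ∈ B) ∧ (∀ B ∈ Q, B ⊆ S) ∧
  (∀ a b c d : Fin N, a < b → b < c → c < d →
    ∀ B ∈ Q, ∀ B' ∈ Q, a ∈ B → c ∈ B → b ∈ B' → d ∈ B' → B = B')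

section TR

variable {K : Type*} [Field K] {N a : ℕ}

/-- preimage of a block under an embedding -/
noncomputable def down (e : Fin a → Fin N) (B : Finset (Fin N)) : Finset (Fin a) :=
  univ.filter (fun q => e q ∈ B)

lemma mem_down {e : Fin a → Fin N} {B : Finset (Fin N)} {q : Fin a} :
    q ∈ down e B ↔ e q ∈ B := by simp [down]

lemma down_image {e : Fin a → Fin N} (he : Function.Injective e) (B : Finset (Fin a)) :
    down e (B.image e) = B := by
  ext q; simp [mem_down, mem_image, he.eq_iff]

lemma image_down {e : Fin a → Fin N} {B : Finset (Fin N)}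
    (hB : B ⊆ univ.image e) : (down e B).image e = B := by
  ext x
  simp only [mem_image, mem_down]
  constructor
  · rintro ⟨q, hq, rfl⟩; exact hq
  · intro hx
    obtain ⟨q, -, rfl⟩ := mem_image.1 (hB hx)
    exact ⟨q, hx, rfl⟩

lemma TR (e : Fin a → Fin N) (he : StrictMono e)
    (u : Finset (Fin a) → K) (v : Finset (Fin N) → K)
    (huv : ∀ B : Finset (Fin a), v (B.image e) = u B) :
    ∑ Q ∈ univ.filter (fun Q : Finset (Finset (Fin N)) => NCFamOn (univ.image e) Q),
      ∏ B ∈ Q, v B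
    = ∑ P ∈ univ.filter (fun P : Finset (Finset (Fin a)) => IsNCPartition P),
      ∏ B ∈ P, u B := by
  have hei : Function.Injective e := he.injective
  apply Finset.sum_nbij' (i := fun Q => Q.image (down e)) (j := fun P => P.image (Finset.image e))
  · -- i maps into target
    intro Q hQ
    rw [mem_filter] at hQ ⊢
    obtain ⟨-, hne, hcov, hsub, hnc⟩ := hQ
    refine ⟨mem_univ _, ?_, ?_, ?_⟩
    · -- nonempty
      intro C hC
      obtain ⟨B, hB, rfl⟩ := mem_image.1 hC
      obtain ⟨x, hx⟩ := hne B hB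
      obtain ⟨q, -, rfl⟩ := mem_image.1 (hsub B hB hx)
      exact ⟨q, mem_down.2 hx⟩
    · -- cover
      intro q
      obtain ⟨B, ⟨hB, heq⟩, huniq⟩ := hcov (e q) (mem_image_of_mem e (mem_univ q))
      refine ⟨down e B, ⟨mem_image_of_mem _ hB, mem_down.2 heq⟩, ?_⟩
      rintro C ⟨hC, hqC⟩
      obtain ⟨B', hB', rfl⟩ := mem_image.1 hC
      rw [huniq B' ⟨hB', mem_down.1 hqC⟩]
    · -- noncrossing
      intro x y z t hxy hyz hzt C hC C' hC' hx hz hy ht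
      obtain ⟨B, hB, rfl⟩ := mem_image.1 hC
      obtain ⟨B', hB', rfl⟩ := mem_image.1 hC'
      rw [hnc (e x) (e y) (e z) (e t) (he hxy) (he hyz) (he hzt) B hB B' hB'
        (mem_down.1 hx) (mem_down.1 hz) (mem_down.1 hy) (mem_down.1 ht)]
  · -- j maps into source
    intro P hP
    rw [mem_filter] at hP ⊢
    obtain ⟨-, hne, hcov, hnc⟩ := hP
    refine ⟨mem_univ _, ?_, ?_, ?_, ?_⟩
    · intro C hC
      obtain ⟨B, hB, rfl⟩ := mem_image.1 hC
      exact (hne B hB).image e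
    · intro i hi
      obtain ⟨q, -, rfl⟩ := mem_image.1 hi
      obtain ⟨B, ⟨hB, hqB⟩, huniq⟩ := hcov q
      refine ⟨B.image e, ⟨mem_image_of_mem _ hB, mem_image_of_mem e hqB⟩, ?_⟩
      rintro C ⟨hC, hqC⟩
      obtain ⟨B', hB', rfl⟩ := mem_image.1 hC
      obtain ⟨q', hq', hq'e⟩ := mem_image.1 hqC
      rw [huniq B' ⟨hB', by rwa [hei hq'e] at hq'⟩]
    · intro C hC
      obtain ⟨B, hB, rfl⟩ := mem_image.1 hC
      exact (image_subset_image (subset_univ B))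
    · intro x y z t hxy hyz hzt C hC C' hC' hx hz hy ht
      obtain ⟨B, hB, rfl⟩ := mem_image.1 hC
      obtain ⟨B', hB', rfl⟩ := mem_image.1 hC'
      obtain ⟨x', hx', rfl⟩ := mem_image.1 hx
      obtain ⟨y', hy', rfl⟩ := mem_image.1 hy
      obtain ⟨z', hz', rfl⟩ := mem_image.1 hz
      obtain ⟨t', ht', rfl⟩ := mem_image.1 ht
      rw [hnc x' y' z' t' (he.lt_iff_lt.1 hxy) (he.lt_iff_lt.1 hyz) (he.lt_iff_lt.1 hzt)
        B hB B' hB' hx' hz' hy' ht']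
  · -- j ∘ i = id
    intro Q hQ
    rw [mem_filter] at hQ
    rw [Finset.image_image]
    rw [Finset.image_congr (g := id) ?_, Finset.image_id]
    intro B hB
    exact image_down (hQ.2.2.2.1 B hB)
  · -- i ∘ j = id
    intro P hP
    rw [Finset.image_image]
    rw [Finset.image_congr (g := id) ?_, Finset.image_id]
    intro B hB
    exact down_image hei B
  · -- weights
    intro Q hQ
    rw [mem_filter] at hQ
    have hinj : ∀ B ∈ Q, ∀ B' ∈ Q, down e B = down e B' → B = B' := by
      intro B hB B' hB' hd
      rw [← image_down (hQ.2.2.2.1 B hB), ← image_down (hQ.2.2.2.1 B' hB'), hd]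
    rw [Finset.prod_image hinj]
    apply Finset.prod_congr rfl
    intro B hB
    rw [← huv (down e B), image_down (hQ.2.2.2.1 B hB)]

end TR


section Sigma
variable {n : ℕ}

lemma mem_blocks_unique {P : Finset (Finset (Fin n))} (hP : IsNCPartition P)
    {B B' : Finset (Fin n)} {i : Fin n} (hB : B ∈ P) (hB' : B' ∈ P)
    (hi : i ∈ B) (hi' : i ∈ B') : B = B' := by
  obtain ⟨C, -, huniq⟩ := hP.2.1 i
  rw [huniq B ⟨hB, hi⟩, huniq B' ⟨hB', hi'⟩]

noncomputable def blk0 {n : ℕ} (P : Finset (Finset (Fin (n+1)))) : Finset (Fin (n+1)) :=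
  (P.filter (fun B => (0 : Fin (n+1)) ∈ B)).sup id

noncomputable def sigma0 {n : ℕ} (P : Finset (Finset (Fin (n+1)))) : ℕ :=
  (n - ((blk0 P).erase 0).sup (fun x => n - x.1)) - 1

lemma blk0_filter_eq {P : Finset (Finset (Fin (n+1)))} (hP : IsNCPartition P)
    {B : Finset (Fin (n+1))} (hB : B ∈ P) (h0 : (0 : Fin (n+1)) ∈ B) :
    P.filter (fun B => (0 : Fin (n+1)) ∈ B) = {B} := by
  ext C
  simp only [mem_filter, mem_singleton]
  constructor
  · rintro ⟨hC, h0C⟩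
    exact mem_blocks_unique hP hC hB h0C h0
  · rintro rfl; exact ⟨hB, h0⟩

lemma blk0_eq {P : Finset (Finset (Fin (n+1)))} (hP : IsNCPartition P)
    {B : Finset (Fin (n+1))} (hB : B ∈ P) (h0 : (0 : Fin (n+1)) ∈ B) :
    blk0 P = B := by
  rw [blk0, blk0_filter_eq hP hB h0, Finset.sup_singleton, id]

lemma sigma0_spec {P : Finset (Finset (Fin (n+1)))} {B : Finset (Fin (n+1))}
    (hblk : blk0 P = B) (hne : (B.erase 0).Nonempty) :
    ∃ x ∈ B.erase 0, (∀ y ∈ B.erase 0, x.1 ≤ y.1) ∧ sigma0 P = x.1 - 1 := by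
  obtain ⟨x, hx, hxs⟩ := Finset.exists_mem_eq_sup (B.erase 0) hne (fun y => n - y.1)
  refine ⟨x, hx, ?_, ?_⟩
  · intro y hy
    have h1 : n - y.1 ≤ n - x.1 := hxs ▸ Finset.le_sup (f := fun y : Fin (n+1) => n - y.1) hy
    have h2 := y.isLt
    have h3 := x.isLt
    omega
  · rw [sigma0, hblk, hxs]
    have := x.isLt
    omega

/-- the main structural facts about a noncrossing partition whose `0`-block is not a
singleton and has second smallest element `c+1`. -/
lemma decomp_facts {c : ℕ} (hc : c < n) {P : Finset (Finset (Fin (n+1)))}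
    (hP : IsNCPartition P) (h0 : ({0} : Finset (Fin (n+1))) ∉ P) (hσ : sigma0 P = c) :
    ∃ B₀ ∈ P, (0 : Fin (n+1)) ∈ B₀ ∧ (⟨c+1, by omega⟩ : Fin (n+1)) ∈ B₀ ∧
      (∀ y ∈ B₀, y ≠ 0 → c + 1 ≤ y.1) ∧
      (∀ B ∈ P, B ≠ B₀ → (∀ z ∈ B, 1 ≤ z.1 ∧ z.1 ≤ c) ∨ (∀ z ∈ B, c + 1 ≤ z.1)) := by
  obtain ⟨B₀, ⟨hB₀, h0B₀⟩, -⟩ := hP.2.1 0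
  have hblk := blk0_eq hP hB₀ h0B₀
  have hne : (B₀.erase 0).Nonempty := by
    rcases Finset.eq_empty_or_nonempty (B₀.erase 0) with he | hne
    · exfalso
      rcases (Finset.erase_eq_empty_iff _ _).1 he with h | h
      · rw [h] at h0B₀; exact absurd h0B₀ (Finset.notMem_empty _)
      · rw [h] at hB₀; exact h0 hB₀
    · exact hne
  obtain ⟨x, hx, hmin, hσx⟩ := sigma0_spec hblk hne
  have hx0 : x ≠ 0 := (Finset.mem_erase.1 hx).1
  have hxval : x.1 = c + 1 := by
    have : x.1 ≠ 0 := fun h => hx0 (Fin.ext (by simp [h]))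
    omega
  have hxmem : x ∈ B₀ := (Finset.mem_erase.1 hx).2
  have hminB : ∀ y ∈ B₀, y ≠ 0 → c + 1 ≤ y.1 := by
    intro y hy hy0
    have := hmin y (Finset.mem_erase.2 ⟨hy0, hy⟩)
    omega
  have hxeq : x = (⟨c+1, by omega⟩ : Fin (n+1)) := Fin.ext hxval
  refine ⟨B₀, hB₀, h0B₀, hxeq ▸ hxmem, hminB, ?_⟩
  -- dichotomy
  intro B hB hBne
  by_cases hhigh : ∀ z ∈ B, c + 1 ≤ z.1
  · exact Or.inr hhigh
  · left
    push_neg at hhigh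
    obtain ⟨y, hy, hylow⟩ := hhigh
    have hz0 : ∀ z, z ∈ B → z ≠ 0 := by
      intro z hz hz0
      subst hz0
      exact hBne (mem_blocks_unique hP hB hB₀ hz h0B₀)
    intro z hz
    have hz0' : z.1 ≠ 0 := fun h => hz0 z hz (Fin.ext (by simp [h]))
    refine ⟨by omega, ?_⟩
    by_contra hzc
    push_neg at hzc
    -- z.1 ≥ c+1, and z ≠ x since x ∈ B₀; so crossing (0, y, x, z)
    have hy0' : y.1 ≠ 0 := fun h => hz0 y hy (Fin.ext (by simp [h]))
    have hzx : z ≠ x := by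
      intro h; subst h
      exact hBne (mem_blocks_unique hP hB hB₀ hz hxmem)
    have hzval : c + 1 < z.1 := by
      rcases Nat.lt_or_ge (c+1) z.1 with h | h
      · exact h
      · exfalso; exact hzx (Fin.ext (by omega))
    have := hP.2.2 0 y x z (by rw [Fin.lt_def]; have h00 : ((0 : Fin (n+1))).1 = 0 := rfl; omega)
      (by rw [Fin.lt_def]; omega) (by rw [Fin.lt_def]; omega)
      B₀ hB₀ B hB h0B₀ hxmem hy hz
    exact hBne this.symm

end Sigma

def eL (n c : ℕ) : Fin c → Fin (n+1) := fun i => ⟨min (i.1+1) n, by omega⟩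

def eH (n c : ℕ) : Fin ((n-1-c)+1) → Fin (n+1) := fun i => ⟨min (i.1+c+1) n, by omega⟩

variable {n c : ℕ}

lemma eL_val (hcn : c ≤ n) (i : Fin c) : (eL n c i).1 = i.1 + 1 := by
  have := i.isLt
  simp only [eL]
  omega

lemma strictMono_eL (hcn : c ≤ n) : StrictMono (eL n c) := by
  intro i j hij
  rw [Fin.lt_def, eL_val hcn, eL_val hcn]
  rw [Fin.lt_def] at hij
  omega

lemma mem_imageL (hcn : c ≤ n) {x : Fin (n+1)} :
    x ∈ univ.image (eL n c) ↔ 1 ≤ x.1 ∧ x.1 ≤ c := by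
  constructor
  · intro hx
    obtain ⟨i, -, rfl⟩ := mem_image.1 hx
    rw [eL_val hcn]
    have := i.isLt
    omega
  · rintro ⟨h1, h2⟩
    refine mem_image.2 ⟨⟨x.1 - 1, by omega⟩, mem_univ _, ?_⟩
    apply Fin.ext
    rw [eL_val hcn]
    simp
    omega

lemma eH_val (hc : c < n) (i : Fin ((n-1-c)+1)) : (eH n c i).1 = i.1 + c + 1 := by
  have := i.isLt
  simp only [eH]
  omega

lemma strictMono_eH (hc : c < n) : StrictMono (eH n c) := by
  intro i j hij
  rw [Fin.lt_def, eH_val hc, eH_val hc]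
  rw [Fin.lt_def] at hij
  omega

lemma mem_imageH (hc : c < n) {x : Fin (n+1)} :
    x ∈ univ.image (eH n c) ↔ c + 1 ≤ x.1 := by
  constructor
  · intro hx
    obtain ⟨i, -, rfl⟩ := mem_image.1 hx
    rw [eH_val hc]
    omega
  · intro h1
    have := x.isLt
    refine mem_image.2 ⟨⟨x.1 - c - 1, by omega⟩, mem_univ _, ?_⟩
    apply Fin.ext
    rw [eH_val hc]
    simp
    omega

lemma eH_zero (hc : c < n) : eH n c 0 = ⟨c+1, by omega⟩ := by
  apply Fin.ext
  rw [eH_val hc]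
  simp

lemma split_c {K : Type*} [Field K] (w f : ℕ → K) {n c : ℕ} (hc : c < n) :
    (∑ P ∈ univ.filter (fun P : Finset (Finset (Fin (n+1))) =>
        (IsNCPartition P ∧ ({0} : Finset (Fin (n+1))) ∉ P) ∧ sigma0 P = c),
      ∏ B ∈ P, (if (0 : Fin (n+1)) ∈ B then w B.card else f B.card))
    = (∑ Q ∈ univ.filter (fun Q : Finset (Finset (Fin (n+1))) => NCFamOn (univ.image (eL n c)) Q),
        ∏ B ∈ Q, f B.card)
      * ∑ Q ∈ univ.filter (fun Q : Finset (Finset (Fin (n+1))) => NCFamOn (univ.image (eH n c)) Q),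
        ∏ B ∈ Q, (if (⟨c+1, by omega⟩ : Fin (n+1)) ∈ B then w (B.card + 1) else f B.card) := by
  have hcn1 : c + 1 < n + 1 := by omega
  rw [Finset.sum_mul_sum, ← Finset.sum_product']
  have hsubL : ∀ B : Finset (Fin (n+1)), B ⊆ univ.image (eL n c) ↔ ∀ z ∈ B, 1 ≤ z.1 ∧ z.1 ≤ c := by
    intro B
    constructor
    · intro h z hz; exact (mem_imageL (by omega)).1 (h hz)
    · intro h z hz; exact (mem_imageL (by omega)).2 (h z hz)
  have hsubH : ∀ B : Finset (Fin (n+1)), B ⊆ univ.image (eH n c) ↔ ∀ z ∈ B, c + 1 ≤ z.1 := by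
    intro B
    constructor
    · intro h z hz; exact (mem_imageH hc).1 (h hz)
    · intro h z hz; exact (mem_imageH hc).2 (h z hz)
  have hval0 : ((0 : Fin (n+1))).1 = 0 := rfl
  have hzero_of_val : ∀ z : Fin (n+1), z.1 = 0 → z = 0 := fun z hz => Fin.ext (by simp [hz])
  have hp0 : ((⟨c+1, hcn1⟩ : Fin (n+1))).1 = c + 1 := rfl
  -- the two maps
  apply Finset.sum_nbij'
    (i := fun P => (P.filter (fun B => B ⊆ univ.image (eL n c)),
      (P.filter (fun B => ¬ B ⊆ univ.image (eL n c))).image (fun B => B.erase 0)))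
    (j := fun Q => Q.1 ∪ Q.2.image (fun B => if (⟨c+1, hcn1⟩ : Fin (n+1)) ∈ B then insert 0 B else B))
  -- ① hi : forward map lands in target
  · intro P hPmem
    rw [mem_filter] at hPmem
    obtain ⟨-, ⟨hP, h0P⟩, hσ⟩ := hPmem
    obtain ⟨B₀, hB₀, h0B₀, hp0B₀, hminB₀, hdich⟩ := decomp_facts hc hP h0P hσ
    rw [Finset.mem_product]
    constructor
    · -- Q₁ = filter (⊆ L) P is an NCFamOn L
      rw [mem_filter]
      refine ⟨mem_univ _, ?_, ?_, ?_, ?_⟩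
      · intro B hB; exact hP.1 B (mem_filter.1 hB).1
      · -- cover
        intro i hi
        rw [mem_imageL (by omega)] at hi
        obtain ⟨B, ⟨hB, hiB⟩, huniq⟩ := hP.2.1 i
        have hBne : B ≠ B₀ := by
          intro h; subst h
          have := hminB₀ i hiB (by intro h; subst h; omega)
          omega
        have hBL : B ⊆ univ.image (eL n c) := by
          rw [hsubL]
          rcases hdich B hB hBne with h | h
          · exact h
          · exfalso; have := h i hiB; omega
        refine ⟨B, ⟨mem_filter.2 ⟨hB, hBL⟩, hiB⟩, ?_⟩
        rintro C ⟨hC, hiC⟩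
        exact huniq C ⟨(mem_filter.1 hC).1, hiC⟩
      · intro B hB; exact (mem_filter.1 hB).2
      · intro a b c' d hab hbc hcd B hB B' hB' ha hc' hb hd
        exact hP.2.2 a b c' d hab hbc hcd B (mem_filter.1 hB).1 B' (mem_filter.1 hB').1 ha hc' hb hd
    · -- Q₂ is an NCFamOn H
      rw [mem_filter]
      have hmem2 : ∀ C, C ∈ (P.filter (fun B => ¬ B ⊆ univ.image (eL n c))).image (fun B => B.erase 0)
          → ∃ B ∈ P, ¬ B ⊆ univ.image (eL n c) ∧ C = B.erase 0 := by
        intro C hC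
        obtain ⟨B, hB, rfl⟩ := mem_image.1 hC
        exact ⟨B, (mem_filter.1 hB).1, (mem_filter.1 hB).2, rfl⟩
      have hkey : ∀ B ∈ P, ¬ B ⊆ univ.image (eL n c) → B.erase 0 ⊆ univ.image (eH n c)
          ∧ (B.erase 0).Nonempty := by
        intro B hB hBL
        by_cases hBB₀ : B = B₀
        · subst hBB₀
          constructor
          · rw [hsubH]
            intro z hz
            exact hminB₀ z (Finset.mem_of_mem_erase hz) (Finset.ne_of_mem_erase hz)
          · exact ⟨⟨c+1, hcn1⟩, Finset.mem_erase.2 ⟨by intro h; rw [Fin.ext_iff] at h; simp at h, hp0B₀⟩⟩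
        · rcases hdich B hB hBB₀ with h | h
          · exfalso; apply hBL; rw [hsubL]; exact h
          · have h0B : (0 : Fin (n+1)) ∉ B := by
              intro h0B; have := h 0 h0B; omega
            rw [Finset.erase_eq_of_notMem h0B]
            refine ⟨by rw [hsubH]; exact h, hP.1 B hB⟩
      refine ⟨mem_univ _, ?_, ?_, ?_, ?_⟩
      · intro C hC
        obtain ⟨B, hB, hBL, rfl⟩ := hmem2 C hC
        exact (hkey B hB hBL).2
      · -- cover of H
        intro i hi
        rw [mem_imageH hc] at hi
        have hi0 : i ≠ 0 := by intro h; subst h; simp at hi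
        obtain ⟨B, ⟨hB, hiB⟩, huniq⟩ := hP.2.1 i
        have hBL : ¬ B ⊆ univ.image (eL n c) := by
          rw [hsubL]; push_neg
          exact ⟨i, hiB, by intro h; omega⟩
        refine ⟨B.erase 0, ⟨mem_image_of_mem _ (mem_filter.2 ⟨hB, hBL⟩), Finset.mem_erase.2 ⟨hi0, hiB⟩⟩, ?_⟩
        rintro C ⟨hC, hiC⟩
        obtain ⟨B', hB', hB'L, rfl⟩ := hmem2 C hC
        rw [huniq B' ⟨hB', Finset.mem_of_mem_erase hiC⟩]
      · intro C hC
        obtain ⟨B, hB, hBL, rfl⟩ := hmem2 C hC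
        exact (hkey B hB hBL).1
      · intro a b c' d hab hbc hcd C hC C' hC' ha hc' hb hd
        obtain ⟨B, hB, hBL, rfl⟩ := hmem2 C hC
        obtain ⟨B', hB', hB'L, rfl⟩ := hmem2 C' hC'
        rw [hP.2.2 a b c' d hab hbc hcd B hB B' hB' (Finset.mem_of_mem_erase ha)
          (Finset.mem_of_mem_erase hc') (Finset.mem_of_mem_erase hb) (Finset.mem_of_mem_erase hd)]
  -- ② hj : backward map lands in source
  · rintro ⟨Q₁, Q₂⟩ hQmem
    rw [Finset.mem_product, mem_filter, mem_filter] at hQmem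
    obtain ⟨⟨-, h1ne, h1cov, h1sub, h1nc⟩, -, h2ne, h2cov, h2sub, h2nc⟩ := hQmem
    have hQ₁L : ∀ B ∈ Q₁, ∀ z ∈ B, 1 ≤ z.1 ∧ z.1 ≤ c := fun B hB => (hsubL B).1 (h1sub B hB)
    have hQ₂L : ∀ B ∈ Q₂, ∀ z ∈ B, c + 1 ≤ z.1 := fun B hB => (hsubH B).1 (h2sub B hB)
    have hQ₁0 : ∀ B ∈ Q₁, (0 : Fin (n+1)) ∉ B := by
      intro B hB h; have := hQ₁L B hB 0 h; omega
    have hQ₂0 : ∀ B ∈ Q₂, (0 : Fin (n+1)) ∉ B := by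
      intro B hB h; have := hQ₂L B hB 0 h; omega
    obtain ⟨Bs, ⟨hBs, hp0Bs⟩, hBsuniq⟩ := h2cov ⟨c+1, hcn1⟩ ((mem_imageH hc).2 (by simp))
    have hmemins : ∀ (B : Finset (Fin (n+1))) (x : Fin (n+1)), x ≠ 0 →
        (x ∈ (if (⟨c+1, hcn1⟩ : Fin (n+1)) ∈ B then insert 0 B else B) ↔ x ∈ B) := by
      intro B x hx
      split
      · rw [Finset.mem_insert]
        exact ⟨fun h => h.resolve_left hx, Or.inr⟩
      · rfl
    have h0memins : ∀ B ∈ Q₂, ((0 : Fin (n+1)) ∈ (if (⟨c+1, hcn1⟩ : Fin (n+1)) ∈ B then insert 0 B else B)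
        ↔ (⟨c+1, hcn1⟩ : Fin (n+1)) ∈ B) := by
      intro B hB
      by_cases h : (⟨c+1, hcn1⟩ : Fin (n+1)) ∈ B
      · rw [if_pos h]; simp [h]
      · rw [if_neg h]; simp [h, hQ₂0 B hB]
    have hp0ne0 : (⟨c+1, hcn1⟩ : Fin (n+1)) ≠ 0 := by
      intro h; rw [Fin.ext_iff] at h; simp at h
    have hins_mem : ∀ C ∈ Q₂.image (fun B => if (⟨c+1, hcn1⟩ : Fin (n+1)) ∈ B then insert 0 B else B),
        ∃ B ∈ Q₂, C = (if (⟨c+1, hcn1⟩ : Fin (n+1)) ∈ B then insert 0 B else B) := by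
      intro C hC
      obtain ⟨B, hB, rfl⟩ := mem_image.1 hC
      exact ⟨B, hB, rfl⟩
    have hNC : IsNCPartition (Q₁ ∪ Q₂.image (fun B => if (⟨c+1, hcn1⟩ : Fin (n+1)) ∈ B then insert 0 B else B)) := by
      refine ⟨?_, ?_, ?_⟩
      · intro B hB
        rcases mem_union.1 hB with h | h
        · exact h1ne B h
        · obtain ⟨B', hB', rfl⟩ := hins_mem B h
          obtain ⟨x, hx⟩ := h2ne B' hB'
          exact ⟨x, (hmemins B' x (fun hh => hQ₂0 B' hB' (hh ▸ hx))).2 hx⟩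
      · -- cover
        intro i
        by_cases hi0 : i = 0
        · subst hi0
          refine ⟨if (⟨c+1, hcn1⟩ : Fin (n+1)) ∈ Bs then insert 0 Bs else Bs,
            ⟨mem_union_right _ (mem_image_of_mem _ hBs), (h0memins Bs hBs).2 hp0Bs⟩, ?_⟩
          rintro C ⟨hC, h0C⟩
          rcases mem_union.1 hC with h | h
          · exact absurd h0C (hQ₁0 C h)
          · obtain ⟨B', hB', rfl⟩ := hins_mem C h
            rw [hBsuniq B' ⟨hB', (h0memins B' hB').1 h0C⟩]
        · by_cases hiL : i.1 ≤ c
          · have hiv : 1 ≤ i.1 := by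
              rcases Nat.eq_zero_or_pos i.1 with h | h
              · exact absurd (hzero_of_val i h) hi0
              · exact h
            obtain ⟨B, ⟨hB, hiB⟩, huniq⟩ := h1cov i ((mem_imageL (by omega)).2 ⟨hiv, hiL⟩)
            refine ⟨B, ⟨mem_union_left _ hB, hiB⟩, ?_⟩
            rintro C ⟨hC, hiC⟩
            rcases mem_union.1 hC with h | h
            · exact huniq C ⟨h, hiC⟩
            · obtain ⟨B', hB', rfl⟩ := hins_mem C h
              have := hQ₂L B' hB' i ((hmemins B' i hi0).1 hiC)
              omega
          · obtain ⟨B, ⟨hB, hiB⟩, huniq⟩ := h2cov i ((mem_imageH hc).2 (by omega))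
            refine ⟨if (⟨c+1, hcn1⟩ : Fin (n+1)) ∈ B then insert 0 B else B,
              ⟨mem_union_right _ (mem_image_of_mem _ hB), (hmemins B i hi0).2 hiB⟩, ?_⟩
            rintro C ⟨hC, hiC⟩
            rcases mem_union.1 hC with h | h
            · have := hQ₁L C h i hiC; omega
            · obtain ⟨B', hB', rfl⟩ := hins_mem C h
              rw [huniq B' ⟨hB', (hmemins B' i hi0).1 hiC⟩]
      · -- noncrossing
        intro a b c' d hab hbc hcd C hC C' hC' haC hc'C hbC' hdC'
        rw [Fin.lt_def] at hab hbc hcd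
        have hbne : b ≠ 0 := fun h => by rw [h] at hab; simp at hab
        have hc'ne : c' ≠ 0 := fun h => by rw [h] at hbc; simp at hbc
        have hdne : d ≠ 0 := fun h => by rw [h] at hcd; simp at hcd
        rcases mem_union.1 hC with h1 | h1 <;> rcases mem_union.1 hC' with h2 | h2
        · exact h1nc a b c' d (Fin.lt_def.2 hab) (Fin.lt_def.2 hbc) (Fin.lt_def.2 hcd) C h1 C' h2 haC hc'C hbC' hdC'
        · obtain ⟨B', hB', rfl⟩ := hins_mem C' h2
          have h1' := hQ₂L B' hB' b ((hmemins B' b hbne).1 hbC')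
          have h2' := hQ₁L C h1 c' hc'C
          omega
        · obtain ⟨B, hB, rfl⟩ := hins_mem C h1
          have h1' := hQ₂L B hB c' ((hmemins B c' hc'ne).1 hc'C)
          have h2' := hQ₁L C' h2 d hdC'
          omega
        · obtain ⟨B, hB, rfl⟩ := hins_mem C h1
          obtain ⟨B', hB', rfl⟩ := hins_mem C' h2
          have hc'B : c' ∈ B := (hmemins B c' hc'ne).1 hc'C
          have hbB' : b ∈ B' := (hmemins B' b hbne).1 hbC'
          have hdB' : d ∈ B' := (hmemins B' d hdne).1 hdC'
          by_cases ha0 : a = 0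
          · subst ha0
            have hp0B : (⟨c+1, hcn1⟩ : Fin (n+1)) ∈ B := (h0memins B hB).1 haC
            by_cases hp0B' : (⟨c+1, hcn1⟩ : Fin (n+1)) ∈ B'
            · rw [hBsuniq B ⟨hB, hp0B⟩, hBsuniq B' ⟨hB', hp0B'⟩]
            · have hbval : c + 1 ≤ b.1 := hQ₂L B' hB' b hbB'
              have hbp0 : b ≠ (⟨c+1, hcn1⟩ : Fin (n+1)) := fun h => hp0B' (h ▸ hbB')
              have hp0b : (⟨c+1, hcn1⟩ : Fin (n+1)) < b := by
                rw [Fin.lt_def]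
                have : b.1 ≠ c + 1 := fun h => hbp0 (Fin.ext (by simpa using h))
                simpa using by omega
              rw [h2nc ⟨c+1, hcn1⟩ b c' d hp0b (Fin.lt_def.2 hbc) (Fin.lt_def.2 hcd)
                B hB B' hB' hp0B hc'B hbB' hdB']
          · have haB : a ∈ B := (hmemins B a ha0).1 haC
            rw [h2nc a b c' d (Fin.lt_def.2 hab) (Fin.lt_def.2 hbc) (Fin.lt_def.2 hcd)
              B hB B' hB' haB hc'B hbB' hdB']
    rw [mem_filter]
    refine ⟨mem_univ _, ⟨hNC, ?_⟩, ?_⟩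
    · -- {0} not a block
      intro h
      rcases mem_union.1 h with h | h
      · exact hQ₁0 _ h (Finset.mem_singleton_self 0)
      · obtain ⟨B, hB, heq⟩ := hins_mem _ h
        by_cases hp0B : (⟨c+1, hcn1⟩ : Fin (n+1)) ∈ B
        · rw [if_pos hp0B] at heq
          have : (⟨c+1, hcn1⟩ : Fin (n+1)) ∈ ({0} : Finset (Fin (n+1))) := by
            rw [heq]; exact Finset.mem_insert_of_mem hp0B
          exact hp0ne0 (Finset.mem_singleton.1 this)
        · rw [if_neg hp0B] at heq
          exact hQ₂0 B hB (by rw [← heq]; exact Finset.mem_singleton_self 0)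
    · -- sigma0 = c
      have hblk : blk0 (Q₁ ∪ Q₂.image (fun B => if (⟨c+1, hcn1⟩ : Fin (n+1)) ∈ B then insert 0 B else B))
          = insert 0 Bs := by
        apply blk0_eq hNC
        · exact mem_union_right _ (mem_image.2 ⟨Bs, hBs, by rw [if_pos hp0Bs]⟩)
        · exact Finset.mem_insert_self 0 Bs
      obtain ⟨x, hx, hxmin, hxσ⟩ := sigma0_spec hblk (by
        rw [Finset.erase_insert (hQ₂0 Bs hBs)]
        exact ⟨_, hp0Bs⟩)
      rw [Finset.erase_insert (hQ₂0 Bs hBs)] at hx hxmin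
      have h1 := hQ₂L Bs hBs x hx
      have h2 := hxmin _ hp0Bs
      rw [hxσ]
      simp at h2
      omega
  -- ③ left inverse
  · intro P hPmem
    rw [mem_filter] at hPmem
    obtain ⟨-, ⟨hP, h0P⟩, hσ⟩ := hPmem
    obtain ⟨B₀, hB₀, h0B₀, hp0B₀, hminB₀, hdich⟩ := decomp_facts hc hP h0P hσ
    show (P.filter _) ∪ _ = P
    rw [Finset.image_image]
    have : ((P.filter (fun B => ¬ B ⊆ univ.image (eL n c))).image
        ((fun B => if (⟨c+1, hcn1⟩ : Fin (n+1)) ∈ B then insert 0 B else B) ∘ (fun B => B.erase 0)))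
        = P.filter (fun B => ¬ B ⊆ univ.image (eL n c)) := by
      rw [Finset.image_congr (g := id), Finset.image_id]
      intro B hB
      rw [mem_coe, mem_filter] at hB
      obtain ⟨hBP, -⟩ := hB
      simp only [Function.comp, id]
      by_cases h0B : (0 : Fin (n+1)) ∈ B
      · have hBB₀ : B = B₀ := mem_blocks_unique hP hBP hB₀ h0B h0B₀
        have hp0e : (⟨c+1, hcn1⟩ : Fin (n+1)) ∈ B.erase 0 := by
          rw [Finset.mem_erase]
          exact ⟨fun h => by rw [Fin.ext_iff] at h; simp at h, hBB₀ ▸ hp0B₀⟩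
        rw [if_pos hp0e, Finset.insert_erase h0B]
      · rw [Finset.erase_eq_of_notMem h0B]
        have hp0B : (⟨c+1, hcn1⟩ : Fin (n+1)) ∉ B := by
          intro h
          exact h0B ((mem_blocks_unique hP hBP hB₀ h hp0B₀) ▸ h0B₀)
        rw [if_neg hp0B]
    rw [this, Finset.filter_union_filter_not_eq]
  -- ④ right inverse
  · rintro ⟨Q₁, Q₂⟩ hQmem
    rw [Finset.mem_product, mem_filter, mem_filter] at hQmem
    obtain ⟨⟨-, h1ne, h1cov, h1sub, h1nc⟩, -, h2ne, h2cov, h2sub, h2nc⟩ := hQmem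
    have hQ₁L : ∀ B ∈ Q₁, ∀ z ∈ B, 1 ≤ z.1 ∧ z.1 ≤ c := fun B hB => (hsubL B).1 (h1sub B hB)
    have hQ₂L : ∀ B ∈ Q₂, ∀ z ∈ B, c + 1 ≤ z.1 := fun B hB => (hsubH B).1 (h2sub B hB)
    have hQ₂0 : ∀ B ∈ Q₂, (0 : Fin (n+1)) ∉ B := by
      intro B hB h; have := hQ₂L B hB 0 h; omega
    have hinsne : ∀ B ∈ Q₂, ∃ x, x ∈ (if (⟨c+1, hcn1⟩ : Fin (n+1)) ∈ B then insert 0 B else B)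
        ∧ c + 1 ≤ x.1 := by
      intro B hB
      obtain ⟨x, hx⟩ := h2ne B hB
      refine ⟨x, ?_, hQ₂L B hB x hx⟩
      by_cases h : (⟨c+1, hcn1⟩ : Fin (n+1)) ∈ B
      · rw [if_pos h]; exact Finset.mem_insert_of_mem hx
      · rw [if_neg h]; exact hx
    have hU1 : (Q₁ ∪ Q₂.image (fun B => if (⟨c+1, hcn1⟩ : Fin (n+1)) ∈ B then insert 0 B else B)).filter
        (fun B => B ⊆ univ.image (eL n c)) = Q₁ := by
      ext C
      rw [mem_filter, mem_union]
      constructor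
      · rintro ⟨hC | hC, hCL⟩
        · exact hC
        · exfalso
          obtain ⟨B, hB, rfl⟩ := mem_image.1 hC
          obtain ⟨x, hx, hxv⟩ := hinsne B hB
          have := (hsubL _).1 hCL x hx
          omega
      · intro hC
        exact ⟨Or.inl hC, h1sub C hC⟩
    have hU2 : (Q₁ ∪ Q₂.image (fun B => if (⟨c+1, hcn1⟩ : Fin (n+1)) ∈ B then insert 0 B else B)).filter
        (fun B => ¬ B ⊆ univ.image (eL n c))
        = Q₂.image (fun B => if (⟨c+1, hcn1⟩ : Fin (n+1)) ∈ B then insert 0 B else B) := by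
      ext C
      rw [mem_filter, mem_union]
      constructor
      · rintro ⟨hC | hC, hCL⟩
        · exact absurd (h1sub C hC) hCL
        · exact hC
      · intro hC
        refine ⟨Or.inr hC, ?_⟩
        obtain ⟨B, hB, rfl⟩ := mem_image.1 hC
        intro hsub'
        obtain ⟨x, hx, hxv⟩ := hinsne B hB
        have := (hsubL _).1 hsub' x hx
        omega
    refine Prod.ext ?_ ?_
    · exact hU1
    · show (_root_.Finset.filter _ _).image _ = Q₂
      rw [hU2, Finset.image_image]
      rw [Finset.image_congr (g := id), Finset.image_id]
      intro B hB
      rw [mem_coe] at hB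
      simp only [Function.comp, id]
      by_cases h : (⟨c+1, hcn1⟩ : Fin (n+1)) ∈ B
      · rw [if_pos h, Finset.erase_insert (hQ₂0 B hB)]
      · rw [if_neg h, Finset.erase_eq_of_notMem (hQ₂0 B hB)]
  -- ⑤ weights
  · intro P hPmem
    rw [mem_filter] at hPmem
    obtain ⟨-, ⟨hP, h0P⟩, hσ⟩ := hPmem
    obtain ⟨B₀, hB₀, h0B₀, hp0B₀, hminB₀, hdich⟩ := decomp_facts hc hP h0P hσ
    rw [← Finset.prod_filter_mul_prod_filter_not P (fun B => B ⊆ univ.image (eL n c))]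
    have hinj : ∀ B ∈ P.filter (fun B => ¬ B ⊆ univ.image (eL n c)),
        ∀ B' ∈ P.filter (fun B => ¬ B ⊆ univ.image (eL n c)), B.erase 0 = B'.erase 0 → B = B' := by
      intro B hB B' hB' he
      rw [mem_filter] at hB hB'
      by_cases h0B : (0 : Fin (n+1)) ∈ B <;> by_cases h0B' : (0 : Fin (n+1)) ∈ B'
      · rw [mem_blocks_unique hP hB.1 hB'.1 h0B h0B']
      · exfalso
        have hBB₀ : B = B₀ := mem_blocks_unique hP hB.1 hB₀ h0B h0B₀
        have hp0e : (⟨c+1, hcn1⟩ : Fin (n+1)) ∈ B' := by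
          rw [← Finset.erase_eq_of_notMem h0B', ← he, Finset.mem_erase]
          exact ⟨fun h => by rw [Fin.ext_iff] at h; simp at h, hBB₀ ▸ hp0B₀⟩
        exact h0B' ((mem_blocks_unique hP hB'.1 hB₀ hp0e hp0B₀) ▸ h0B₀)
      · exfalso
        have hBB₀ : B' = B₀ := mem_blocks_unique hP hB'.1 hB₀ h0B' h0B₀
        have hp0e : (⟨c+1, hcn1⟩ : Fin (n+1)) ∈ B := by
          rw [← Finset.erase_eq_of_notMem h0B, he, Finset.mem_erase]
          exact ⟨fun h => by rw [Fin.ext_iff] at h; simp at h, hBB₀ ▸ hp0B₀⟩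
        exact h0B ((mem_blocks_unique hP hB.1 hB₀ hp0e hp0B₀) ▸ h0B₀)
      · rw [← Finset.erase_eq_of_notMem h0B, he, Finset.erase_eq_of_notMem h0B']
    rw [Finset.prod_image hinj]
    congr 1
    · apply Finset.prod_congr rfl
      intro B hB
      rw [mem_filter] at hB
      rw [if_neg]
      intro h0B
      have := (hsubL B).1 hB.2 0 h0B
      omega
    · apply Finset.prod_congr rfl
      intro B hB
      rw [mem_filter] at hB
      by_cases h0B : (0 : Fin (n+1)) ∈ B
      · have hBB₀ : B = B₀ := mem_blocks_unique hP hB.1 hB₀ h0B h0B₀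
        have hp0e : (⟨c+1, hcn1⟩ : Fin (n+1)) ∈ B.erase 0 := by
          rw [Finset.mem_erase]
          exact ⟨fun h => by rw [Fin.ext_iff] at h; simp at h, hBB₀ ▸ hp0B₀⟩
        rw [if_pos h0B, if_pos hp0e, Finset.card_erase_of_mem h0B]
        have hcard : 1 ≤ B.card := Finset.card_pos.2 ⟨0, h0B⟩
        congr 1
        omega
      · have hp0B : (⟨c+1, hcn1⟩ : Fin (n+1)) ∉ B := by
          intro h
          exact h0B ((mem_blocks_unique hP hB.1 hB₀ h hp0B₀) ▸ h0B₀)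
        rw [if_neg h0B, Finset.erase_eq_of_notMem h0B, if_neg hp0B]

section S
variable {K : Type*} [Field K]



noncomputable def sS (w f : ℕ → K) (n : ℕ) : K :=
  ∑ P ∈ Finset.univ.filter (fun P : Finset (Finset (Fin (n+1))) => IsNCPartition P),
    ∏ B ∈ P, (if (0 : Fin (n+1)) ∈ B then w B.card else f B.card)

lemma ncSum_zero (f : ℕ → K) : ncSum f 0 = 1 := by
  rw [ncSum]
  have : (Finset.univ.filter (fun P : Finset (Finset (Fin 0)) => IsNCPartition P)) = {∅} := by
    ext P
    simp only [mem_filter, mem_univ, true_and, mem_singleton]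
    constructor
    · intro hP
      rcases Finset.eq_empty_or_nonempty P with h | ⟨B, hB⟩
      · exact h
      · exfalso
        obtain ⟨x, -⟩ := hP.1 B hB
        exact x.elim0
    · rintro rfl
      exact ⟨fun B hB => absurd hB (Finset.notMem_empty B), fun i => i.elim0,
        fun a _ _ _ _ _ _ _ hB => absurd hB (Finset.notMem_empty _)⟩
  rw [this, Finset.sum_singleton, Finset.prod_empty]

/-- part (i): partitions with `{0}` as a singleton block -/
lemma part_one (w f : ℕ → K) (n : ℕ) :
    (∑ P ∈ univ.filter (fun P : Finset (Finset (Fin (n+1))) =>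
        IsNCPartition P ∧ ({0} : Finset (Fin (n+1))) ∈ P),
      ∏ B ∈ P, (if (0 : Fin (n+1)) ∈ B then w B.card else f B.card))
    = w 1 * ∑ Q ∈ univ.filter (fun Q : Finset (Finset (Fin (n+1))) =>
        NCFamOn (univ.image (eL n n)) Q), ∏ B ∈ Q, f B.card := by
  rw [Finset.mul_sum]
  have hmemL : ∀ x : Fin (n+1), x ∈ univ.image (eL n n) ↔ x ≠ 0 := by
    intro x
    rw [mem_imageL le_rfl]
    have := x.isLt
    constructor
    · rintro ⟨h1, -⟩ h; rw [h] at h1; simp at h1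
    · intro h
      have : x.1 ≠ 0 := fun hh => h (Fin.ext (by simpa using hh))
      omega
  apply Finset.sum_nbij' (i := fun P => P.erase {0}) (j := fun Q => insert {0} Q)
  · -- forward membership
    intro P hPmem
    rw [mem_filter] at hPmem ⊢
    obtain ⟨-, hP, h0P⟩ := hPmem
    have h0mem : ∀ B ∈ P.erase {0}, (0 : Fin (n+1)) ∉ B := by
      intro B hB h0B
      rw [Finset.mem_erase] at hB
      exact hB.1 (mem_blocks_unique hP hB.2 h0P h0B (Finset.mem_singleton_self 0))
    refine ⟨mem_univ _, ?_, ?_, ?_, ?_⟩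
    · intro B hB; exact hP.1 B (Finset.mem_of_mem_erase hB)
    · intro i hi
      rw [hmemL] at hi
      obtain ⟨B, ⟨hB, hiB⟩, huniq⟩ := hP.2.1 i
      have hBne : B ≠ {0} := by
        intro h; rw [h, Finset.mem_singleton] at hiB; exact hi hiB
      refine ⟨B, ⟨Finset.mem_erase.2 ⟨hBne, hB⟩, hiB⟩, ?_⟩
      rintro C ⟨hC, hiC⟩
      exact huniq C ⟨Finset.mem_of_mem_erase hC, hiC⟩
    · intro B hB z hz
      rw [hmemL]
      intro h; rw [h] at hz
      exact h0mem B hB hz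
    · intro a b c d hab hbc hcd B hB B' hB' ha hc hb hd
      exact hP.2.2 a b c d hab hbc hcd B (Finset.mem_of_mem_erase hB)
        B' (Finset.mem_of_mem_erase hB') ha hc hb hd
  · -- backward membership
    intro Q hQmem
    rw [mem_filter] at hQmem ⊢
    obtain ⟨-, hne, hcov, hsub, hnc⟩ := hQmem
    have hQ0 : ∀ B ∈ Q, (0 : Fin (n+1)) ∉ B := by
      intro B hB h
      exact ((hmemL 0).1 (hsub B hB h)) rfl
    refine ⟨mem_univ _, ⟨?_, ?_, ?_⟩, Finset.mem_insert_self _ _⟩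
    · intro B hB
      rcases Finset.mem_insert.1 hB with h | h
      · subst h; exact ⟨0, Finset.mem_singleton_self 0⟩
      · exact hne B h
    · intro i
      by_cases hi0 : i = 0
      · subst hi0
        refine ⟨{0}, ⟨Finset.mem_insert_self _ _, Finset.mem_singleton_self 0⟩, ?_⟩
        rintro C ⟨hC, h0C⟩
        rcases Finset.mem_insert.1 hC with h | h
        · exact h
        · exact absurd h0C (hQ0 C h)
      · obtain ⟨B, ⟨hB, hiB⟩, huniq⟩ := hcov i ((hmemL i).2 hi0)
        refine ⟨B, ⟨Finset.mem_insert_of_mem hB, hiB⟩, ?_⟩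
        rintro C ⟨hC, hiC⟩
        rcases Finset.mem_insert.1 hC with h | h
        · subst h; exact absurd (Finset.mem_singleton.1 hiC) hi0
        · exact huniq C ⟨h, hiC⟩
    · intro a b c d hab hbc hcd B hB B' hB' ha hc hb hd
      rw [Fin.lt_def] at hab hbc hcd
      have hcne : c ≠ 0 := fun h => by rw [h] at hbc; simp at hbc
      have hbne : b ≠ 0 := fun h => by rw [h] at hab; simp at hab
      rcases Finset.mem_insert.1 hB with h1 | h1
      · subst h1; exact absurd (Finset.mem_singleton.1 hc) hcne
      · rcases Finset.mem_insert.1 hB' with h2 | h2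
        · subst h2; exact absurd (Finset.mem_singleton.1 hb) hbne
        · exact hnc a b c d (Fin.lt_def.2 hab) (Fin.lt_def.2 hbc) (Fin.lt_def.2 hcd)
            B h1 B' h2 ha hc hb hd
  · -- left inverse
    intro P hPmem
    rw [mem_filter] at hPmem
    exact Finset.insert_erase hPmem.2.2
  · -- right inverse
    intro Q hQmem
    rw [mem_filter] at hQmem
    apply Finset.erase_insert
    intro h
    exact ((hmemL 0).1 (hQmem.2.2.2.1 _ h (Finset.mem_singleton_self 0))) rfl
  · -- weights
    intro P hPmem
    rw [mem_filter] at hPmem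
    obtain ⟨-, hP, h0P⟩ := hPmem
    rw [← Finset.mul_prod_erase P _ h0P]
    have h1 : (if (0 : Fin (n+1)) ∈ ({0} : Finset (Fin (n+1))) then w (({0} : Finset (Fin (n+1))).card)
        else f (({0} : Finset (Fin (n+1))).card)) = w 1 := by
      rw [if_pos (Finset.mem_singleton_self 0), Finset.card_singleton]
    rw [h1]
    congr 1
    apply Finset.prod_congr rfl
    intro B hB
    rw [if_neg]
    intro h0B
    rw [Finset.mem_erase] at hB
    exact hB.1 (mem_blocks_unique hP hB.2 h0P h0B (Finset.mem_singleton_self 0))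

end S


-- MAIN RECURSION AND ASSEMBLY

section Main
variable {K : Type*} [Field K]

open PowerSeries

lemma strictMono_eL' {n c : ℕ} (hcn : c ≤ n) : StrictMono (eL n c) := by
  intro i j hij
  rw [Fin.lt_def, eL_val hcn, eL_val hcn]
  rw [Fin.lt_def] at hij
  omega

set_option maxHeartbeats 1000000 in
lemma sS_rec (w f : ℕ → K) (n : ℕ) :
    sS w f n = w 1 * ncSum f n
      + ∑ c ∈ Finset.range n, ncSum f c * sS (fun k => w (k+1)) f (n-1-c) := by
  rw [sS]
  rw [← Finset.sum_filter_add_sum_filter_not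
    (univ.filter (fun P : Finset (Finset (Fin (n+1))) => IsNCPartition P))
    (fun P => ({0} : Finset (Fin (n+1))) ∈ P)]
  congr 1
  · rw [Finset.filter_filter]
    rw [part_one w f n]
    congr 1
    rw [TR (eL n n) (strictMono_eL' le_rfl) (fun B => f B.card) (fun B => f B.card)
      (fun B => by show f (B.image (eL n n)).card = f B.card
                   rw [Finset.card_image_of_injective _ (strictMono_eL' le_rfl).injective])]
    rfl
  · rw [Finset.filter_filter]
    have hmap : ∀ P ∈ univ.filter (fun P : Finset (Finset (Fin (n+1))) =>
        IsNCPartition P ∧ ¬ ({0} : Finset (Fin (n+1))) ∈ P), sigma0 P ∈ Finset.range n := by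
      intro P hPmem
      rw [mem_filter] at hPmem
      obtain ⟨-, hP, h0P⟩ := hPmem
      obtain ⟨B₀, ⟨hB₀, h0B₀⟩, -⟩ := hP.2.1 0
      have hblk := blk0_eq hP hB₀ h0B₀
      have hne : (B₀.erase 0).Nonempty := by
        rcases Finset.eq_empty_or_nonempty (B₀.erase 0) with he | hne
        · exfalso
          rcases (Finset.erase_eq_empty_iff _ _).1 he with h | h
          · rw [h] at h0B₀; exact absurd h0B₀ (Finset.notMem_empty _)
          · rw [h] at hB₀; exact h0P hB₀
        · exact hne
      obtain ⟨x, hx, -, hσx⟩ := sigma0_spec hblk hne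
      have hx0 : x ≠ 0 := (Finset.mem_erase.1 hx).1
      have hx1 : 1 ≤ x.1 := by
        rcases Nat.eq_zero_or_pos x.1 with h | h
        · exact absurd (Fin.ext (by simpa using h)) hx0
        · exact h
      have := x.isLt
      rw [Finset.mem_range, hσx]
      omega
    rw [← Finset.sum_fiberwise_of_maps_to hmap _]
    apply Finset.sum_congr rfl
    intro c hc
    rw [Finset.filter_filter]
    rw [split_c w f (Finset.mem_range.1 hc)]
    have hcn : c ≤ n := le_of_lt (Finset.mem_range.1 hc)
    congr 1
    · rw [TR (eL n c) (strictMono_eL' hcn) (fun B => f B.card) (fun B => f B.card)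
        (fun B => by show f (B.image (eL n c)).card = f B.card
                     rw [Finset.card_image_of_injective _ (strictMono_eL' hcn).injective])]
      rfl
    · have hc' : c < n := Finset.mem_range.1 hc
      rw [TR (eH n c) (strictMono_eH hc')
        (fun B => if (0 : Fin ((n-1-c)+1)) ∈ B then w (B.card+1) else f B.card)
        (fun B => if (⟨c+1, by omega⟩ : Fin (n+1)) ∈ B then w (B.card + 1) else f B.card)
        ?_]
      · rfl
      · intro B
        have hmem : ((⟨c+1, by omega⟩ : Fin (n+1)) ∈ B.image (eH n c)) ↔ (0 : Fin ((n-1-c)+1)) ∈ B := by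
          rw [← eH_zero hc']
          constructor
          · intro h
            obtain ⟨i, hi, heq⟩ := mem_image.1 h
            rwa [(strictMono_eH hc').injective heq] at hi
          · exact fun h => mem_image_of_mem _ h
        show (if (⟨c+1, by omega⟩ : Fin (n+1)) ∈ B.image (eH n c) then w ((B.image (eH n c)).card + 1)
            else f ((B.image (eH n c)).card))
          = (if (0 : Fin ((n-1-c)+1)) ∈ B then w (B.card+1) else f B.card)
        rw [Finset.card_image_of_injective _ (strictMono_eH hc').injective]
        by_cases h : (0 : Fin ((n-1-c)+1)) ∈ B
        · rw [if_pos (hmem.2 h), if_pos h]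
        · rw [if_neg (fun hh => h (hmem.1 hh)), if_neg h]

/-- the H power series -/
noncomputable def Hs (f : ℕ → K) : PowerSeries K :=
  PowerSeries.mk fun m => if m = 0 then 1 else ncSum f m

lemma constantCoeff_XHs (f : ℕ → K) : constantCoeff (X * Hs f) = 0 := by
  rw [map_mul, constantCoeff_X, zero_mul]

lemma coeff_XHs (f : ℕ → K) (a : ℕ) : coeff (a+1) (X * Hs f) = ncSum f a := by
  rw [coeff_succ_X_mul, Hs, coeff_mk]
  rcases Nat.eq_zero_or_pos a with h | h
  · rw [if_pos h, h, ncSum_zero]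
  · rw [if_neg (by omega)]

lemma coeff_XHs_zero (f : ℕ → K) : coeff 0 (X * Hs f) = 0 := by
  rw [coeff_zero_eq_constantCoeff, constantCoeff_XHs]

lemma conv_step (f : ℕ → K) (k n : ℕ) :
    coeff (n+1) ((X * Hs f)^(k+2))
      = ∑ c ∈ Finset.range n, ncSum f c * coeff (n-c) ((X * Hs f)^(k+1)) := by
  rw [pow_succ', coeff_mul, Finset.Nat.sum_antidiagonal_eq_sum_range_succ_mk]
  rw [Finset.sum_range_succ']
  simp only [Nat.sub_zero]
  rw [coeff_XHs_zero, zero_mul, add_zero]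
  rw [Finset.sum_range_succ]
  have hz : (n + 1) - (n + 1) = 0 := by omega
  rw [hz, coeff_pow_eq_zero (constantCoeff_XHs f) (by omega), mul_zero, add_zero]
  apply Finset.sum_congr rfl
  intro c hc
  rw [coeff_XHs]
  have harith : n + 1 - (c + 1) = n - c := by omega
  rw [harith]

lemma sS_closed (f : ℕ → K) (n : ℕ) : ∀ w : ℕ → K,
    sS w f n = ∑ k ∈ Finset.range (n+1), w (k+1) * coeff (n+1) ((X * Hs f)^(k+1)) := by
  induction n using Nat.strong_induction_on with
  | _ n ih =>
    intro w
    rw [sS_rec, Finset.sum_range_succ']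
    have hlast : w (0+1) * coeff (n+1) ((X * Hs f)^(0+1)) = w 1 * ncSum f n := by
      rw [pow_one, coeff_XHs]
    rw [hlast, add_comm]
    congr 1
    have hinner : ∀ c ∈ Finset.range n,
        ncSum f c * sS (fun k => w (k+1)) f (n-1-c)
        = ∑ k ∈ Finset.range n, ncSum f c * ((fun k => w (k+1)) (k+1) * coeff (n-c) ((X * Hs f)^(k+1))) := by
      intro c hc
      have hcn : c < n := Finset.mem_range.1 hc
      rw [ih (n-1-c) (by omega)]
      have harith : n - 1 - c + 1 = n - c := by omega
      rw [harith]
      rw [Finset.mul_sum]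
      apply Finset.sum_subset (Finset.range_subset_range.2 (by omega))
      intro k _ hk
      rw [Finset.mem_range, not_lt] at hk
      rw [coeff_pow_eq_zero (constantCoeff_XHs f) (by omega), mul_zero, mul_zero]
    rw [Finset.sum_congr rfl hinner, Finset.sum_comm]
    apply Finset.sum_congr rfl
    intro k _
    rw [conv_step, Finset.mul_sum]
    apply Finset.sum_congr rfl
    intro c _
    ring

lemma key_eq (f : ℕ → K) :
    pscomp (PowerSeries.mk fun m => if m = 0 then (1 : K) else f m) (X * Hs f) = Hs f := by
  ext n
  rw [coeff_pscomp]
  cases n with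
  | zero =>
    simp only [Finset.range_one, Finset.sum_singleton, pow_zero, coeff_mk]
    rw [Hs, coeff_mk]
    simp
  | succ n =>
    rw [Finset.sum_range_succ']
    have h0 : coeff 0 (PowerSeries.mk fun m => if m = 0 then (1:K) else f m)
        * coeff (n+1) ((X * Hs f)^0) = 0 := by
      rw [pow_zero, coeff_one, if_neg (by omega), mul_zero]
    rw [h0, add_zero]
    have hsum : ∀ k ∈ Finset.range (n+1),
        coeff (k+1) (PowerSeries.mk fun m => if m = 0 then (1:K) else f m)
          * coeff (n+1) ((X * Hs f)^(k+1))
        = f (k+1) * coeff (n+1) ((X * Hs f)^(k+1)) := by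
      intro k _
      rw [coeff_mk, if_neg (by omega)]
    rw [Finset.sum_congr rfl hsum]
    have hhs : coeff (n+1) (Hs f) = ncSum f (n+1) := by
      rw [Hs, coeff_mk, if_neg (by omega)]
    rw [hhs]
    have h1 : ncSum f (n+1) = sS f f n := by
      rw [ncSum, sS]
      apply Finset.sum_congr rfl
      intro P _
      apply Finset.prod_congr rfl
      intro B _
      rw [ite_self]
    rw [h1, sS_closed f n f]

end Main
/-- **Speicher's noncrossing partition analogue of the Exponential Formula.**
With `F(x) = 1 + Σ_{n≥1} f(n)xⁿ` and `H(x) = 1 + Σ_{n≥1} h(n)xⁿ` where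
`h(n) = Σ_{π ∈ NC_n} ∏_B f(#B)`, the series `x·H(x)` is the compositional
inverse of `x/F(x)` (here `G = x/F` is the unique series with `G·F = x`). -/
theorem speicher_exponential_formula {K : Type*} [Field K] (f : ℕ → K)
    (F H : PowerSeries K)
    (hF : F = PowerSeries.mk fun n => if n = 0 then 1 else f n)
    (hH : H = PowerSeries.mk fun n => if n = 0 then 1 else ncSum f n) :
    ∀ G : PowerSeries K, G * F = X →
      pscomp G (X * H) = X ∧ pscomp (X * H) G = X := by
  intro G hG
  have hHs : H = Hs f := by rw [hH]; rfl
  have hA0 : constantCoeff (X * H) = 0 := by rw [map_mul, constantCoeff_X, zero_mul]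
  have hH0 : constantCoeff H = 1 := by
    rw [hH, ← coeff_zero_eq_constantCoeff, coeff_mk]; simp
  have hA1 : coeff 1 (X * H) = 1 := by
    have h1 : coeff 1 (X * H) = coeff 0 H := coeff_succ_X_mul 0 H
    rw [h1, coeff_zero_eq_constantCoeff, hH0]
  have hF0 : constantCoeff F = 1 := by
    rw [hF, ← coeff_zero_eq_constantCoeff, coeff_mk]; simp
  have hG0 : constantCoeff G = 0 := by
    have h := congrArg (constantCoeff) hG
    rwa [map_mul, hF0, mul_one, constantCoeff_X] at h
  have hkey : pscomp F (X * H) = H := by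
    rw [hF, hHs]
    exact key_eq f
  have hHne : H ≠ 0 := by
    intro h
    rw [h, map_zero] at hH0
    exact one_ne_zero hH0.symm
  have part1 : pscomp G (X * H) = X := by
    apply mul_right_cancel₀ hHne
    calc pscomp G (X*H) * H = pscomp G (X*H) * pscomp F (X*H) := by rw [hkey]
      _ = pscomp (G * F) (X*H) := (pscomp_mul hA0 G F).symm
      _ = pscomp X (X*H) := by rw [hG]
      _ = X * H := pscomp_X hA0
  have part2 : pscomp (X * H) G = X := by
    have hcomp : pscomp (pscomp (X*H) G) (X*H) = X * H := by
      rw [pscomp_assoc hG0 hA0, part1, pscomp_X_right]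
    have hz : pscomp (pscomp (X*H) G - X) (X*H) = 0 := by
      rw [pscomp_sub, hcomp, pscomp_X hA0, sub_self]
    exact sub_eq_zero.1 (pscomp_cancel hA0 hA1 hz)
  exact ⟨part1, part2⟩
end

section
/- Fix an integer n ≥ 2 and nonnegative integers r₃, …, r_n satisfying Σ_{i=3}^{n} (i−2)·r_i = n−2, and set |r| = Σ_{i=3}^{n} r_i. Then the number of Schröder trees on n−1 leaves having, for each 3 ≤ i ≤ n, exactly r_i internal vertices with i−1 children (equivalently, under the paper's encoding, the number of series-reduced planar trees on n leaves with exactly r_i internal vertices of degree i) equals (n+|r|−2)! / ((n−1)! · r₃! · r₄! ··· r_n!). -/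
/-- Finite rooted plane trees: a tree is a (possibly empty) list of subtrees.
A leaf is a node with no children. -/
inductive PlaneTree : Type where
  | node : List PlaneTree → PlaneTree

namespace PlaneTree

/-- The number of leaves of a plane tree. -/
def leaves : PlaneTree → ℕ
  | node ts => if ts.isEmpty then 1 else (ts.attach.map (fun t => leaves t.1)).sum
decreasing_by have := List.sizeOf_lt_of_mem t.2; simp only [PlaneTree.node.sizeOf_spec]; omega

/-- A plane tree is a Schröder tree if every internal (non-leaf) vertex has at
least two children. -/
def isSchroder : PlaneTree → Prop
  | node ts => (ts.isEmpty ∨ 2 ≤ ts.length) ∧ ∀ t ∈ ts, isSchroder t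
decreasing_by have := List.sizeOf_lt_of_mem ‹_ ∈ ts›; simp only [PlaneTree.node.sizeOf_spec]; omega

/-- The number of internal vertices of degree `d` (i.e. with `d - 1` children)
of a plane tree. -/
def countDeg (d : ℕ) : PlaneTree → ℕ
  | node ts => (if ¬ ts.isEmpty ∧ ts.length + 1 = d then 1 else 0)
      + (ts.attach.map (fun t => countDeg d t.1)).sum
decreasing_by have := List.sizeOf_lt_of_mem t.2; simp only [PlaneTree.node.sizeOf_spec]; omega

def intDegs : PlaneTree → Multiset ℕ
  | node ts => (if ts.isEmpty then 0 else {ts.length})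
      + (ts.attach.map (fun t => intDegs t.1)).sum
decreasing_by have := List.sizeOf_lt_of_mem t.2; simp only [PlaneTree.node.sizeOf_spec]; omega

lemma leaves_node (ts : List PlaneTree) :
    leaves (node ts) = if ts.isEmpty then 1 else (ts.map leaves).sum := by
  rw [leaves, List.attach_map_val]

lemma intDegs_node (ts : List PlaneTree) :
    intDegs (node ts) = (if ts.isEmpty then 0 else {ts.length})
      + (ts.map intDegs).sum := by
  rw [intDegs, List.attach_map_val]

lemma isSchroder_node (ts : List PlaneTree) :
    isSchroder (node ts) ↔ (ts.isEmpty ∨ 2 ≤ ts.length) ∧ ∀ t ∈ ts, isSchroder t := by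
  rw [isSchroder]


lemma countDeg_node (d : ℕ) (ts : List PlaneTree) :
    countDeg d (node ts) = (if ¬ ts.isEmpty ∧ ts.length + 1 = d then 1 else 0)
      + (ts.map (countDeg d)).sum := by
  rw [countDeg, List.attach_map_val]

lemma ind (P : PlaneTree → Prop) (h : ∀ ts : List PlaneTree, (∀ t ∈ ts, P t) → P (node ts)) :
    ∀ t, P t := by
  intro t
  induction t using PlaneTree.rec (motive_2 := fun l => ∀ t ∈ l, P t) with
  | node ts ih => exact h ts ih
  | nil => rename_i t ht; simp at ht
  | cons a l iha ihl =>
    rename_i t ht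
    rcases List.mem_cons.1 ht with rfl | h'
    · exact iha
    · exact ihl _ h'

lemma one_le_leaves (t : PlaneTree) : 1 ≤ leaves t := by
  induction t using ind with
  | h ts ih =>
    rw [leaves_node]
    rcases ts with _ | ⟨a, l⟩
    · simp
    · have := ih a (by simp)
      simp only [List.isEmpty_cons, if_false, Bool.false_eq_true, List.map_cons, List.sum_cons]
      omega

lemma sum_intDegs (t : PlaneTree) :
    (intDegs t).sum + 1 = leaves t + Multiset.card (intDegs t) := by
  induction t using ind with
  | h ts ih =>
    rw [leaves_node, intDegs_node]
    rcases ts with _ | ⟨a, l⟩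
    · simp
    · simp only [List.isEmpty_cons, if_false, Bool.false_eq_true, ite_false]
      have key : ∀ l' : List PlaneTree, (∀ t ∈ l', (intDegs t).sum + 1 = leaves t + Multiset.card (intDegs t)) →
          ((l'.map intDegs).sum).sum + l'.length = (l'.map leaves).sum + Multiset.card ((l'.map intDegs).sum) := by
        intro l' hl'
        induction l' with
        | nil => simp
        | cons b m ihm =>
          simp only [List.map_cons, List.sum_cons, Multiset.sum_add, Multiset.card_add, List.length_cons]
          have hb := hl' b (by simp)
          have hm := ihm (fun t ht => hl' t (by simp [ht]))
          omega
      have := key (a :: l) ih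
      simp only [Multiset.sum_add, Multiset.card_add, Multiset.sum_singleton, Multiset.card_singleton] at *
      simp only [List.length_cons] at this ⊢
      omega

lemma mem_list_sum {α : Type*} {c : α} {L : List (Multiset α)} (h : c ∈ L.sum) :
    ∃ s ∈ L, c ∈ s := by
  induction L with
  | nil => simp at h
  | cons a l ihl =>
    rw [List.sum_cons, Multiset.mem_add] at h
    rcases h with h | h
    · exact ⟨a, by simp, h⟩
    · obtain ⟨s, hs, hcs⟩ := ihl h
      exact ⟨s, by simp [hs], hcs⟩

lemma schroder_intDegs {t : PlaneTree} (h : isSchroder t) : ∀ c ∈ intDegs t, 2 ≤ c := by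
  induction t using ind with
  | h ts ih =>
    rw [isSchroder] at h
    intro c hc
    rw [intDegs_node] at hc
    rcases Multiset.mem_add.1 hc with hc | hc
    · rcases ts with _ | ⟨a, l⟩
      · simp at hc
      · simp only [List.isEmpty_cons, if_false, Bool.false_eq_true, ite_false, Multiset.mem_singleton] at hc
        subst hc
        rcases h.1 with h1 | h1
        · simp at h1
        · exact h1
    · obtain ⟨s, hs, hcs⟩ := mem_list_sum hc
      obtain ⟨u, hu, rfl⟩ := List.mem_map.1 hs
      exact ih u hu (h.2 u hu) c hcs

lemma count_list_sum {c : α} {L : List (Multiset α)} [DecidableEq α] :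
    Multiset.count c L.sum = (L.map (Multiset.count c)).sum := by
  induction L with
  | nil => simp
  | cons a l ihl => simp [Multiset.count_add, ihl]

lemma countDeg_eq_count (d : ℕ) (hd : 2 ≤ d) (t : PlaneTree) :
    countDeg d t = (intDegs t).count (d - 1) := by
  induction t using ind with
  | h ts ih =>
    rw [countDeg_node, intDegs_node]
    have hmap : ((ts.map (countDeg d)).sum) = ((ts.map intDegs).map (Multiset.count (d-1))).sum := by
      rw [List.map_map]
      congr 1
      exact List.map_congr_left fun t ht => ih t ht
    rw [Multiset.count_add, hmap, count_list_sum]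
    congr 1
    rcases ts with _ | ⟨a, l⟩
    · simp
    · simp only [List.isEmpty_cons, if_false, Bool.false_eq_true, ite_false,
        Multiset.count_singleton, not_false_iff, true_and]
      have : (a :: l).length + 1 = d ↔ (a :: l).length = d - 1 := by omega
      simp only [this, List.length_cons]
      split_ifs with h1 h2 h2 <;> omega


end PlaneTree

open PlaneTree

def SForest (k L : ℕ) (m : Multiset ℕ) : Type :=
  {l : List PlaneTree // l.length = k ∧ (∀ t ∈ l, t.isSchroder) ∧
    (l.map leaves).sum = L ∧ (l.map intDegs).sum = m}

variable {k L : ℕ} {m : Multiset ℕ}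

def fwd (x : SForest (k+1) (L+1) m) :
    SForest k L m ⊕ (Σ j : {x : ℕ // x ∈ m.toFinset}, SForest (k + j.1) (L+1) (m.erase j.1)) :=
  match x with
  | ⟨[], h⟩ => absurd h.1 (by simp)
  | ⟨PlaneTree.node ts :: rest, h⟩ =>
    if hts : ts.isEmpty then
      Sum.inl ⟨rest, by
        obtain ⟨h1, h2, h3, h4⟩ := h
        rw [List.isEmpty_iff] at hts
        subst hts
        simp only [List.map_cons, List.sum_cons, leaves_node, intDegs_node] at h1 h3 h4
        simp only [List.isEmpty_nil, if_true, List.length_cons] at h1 h3 h4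
        refine ⟨by omega, fun t ht => h2 t (by simp [ht]), by omega, by simpa using h4⟩⟩
    else
      Sum.inr ⟨⟨ts.length, by
          obtain ⟨h1, h2, h3, h4⟩ := h
          rw [Multiset.mem_toFinset, ← h4]
          simp [intDegs_node, hts]⟩,
        ⟨ts ++ rest, by
          obtain ⟨h1, h2, h3, h4⟩ := h
          have hne : ¬ ts.isEmpty := hts
          simp only [List.map_cons, List.sum_cons, leaves_node, intDegs_node,
            if_neg hne, List.length_cons] at h1 h3 h4
          have hkey : ts.length ::ₘ ((ts.map intDegs).sum + (rest.map intDegs).sum) = m := by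
            rw [← h4, ← Multiset.singleton_add, add_assoc]
          refine ⟨?_, fun t ht => ?_, by simp only [List.map_append, List.sum_append]; omega, ?_⟩
          · show (ts ++ rest).length = k + ts.length
            simp only [List.length_append]; omega
          · rcases List.mem_append.1 ht with ht | ht
            · have := h2 (PlaneTree.node ts) (by simp)
              rw [isSchroder_node] at this
              exact this.2 t ht
            · exact h2 t (by simp [ht])
          · show (List.map intDegs (ts ++ rest)).sum = m.erase ts.length
            rw [← hkey, Multiset.erase_cons_head]
            simp [List.map_append]⟩⟩

def bwd (y : SForest k L m ⊕ (Σ j : {x : ℕ // x ∈ m.toFinset}, SForest (k + j.1) (L+1) (m.erase j.1)))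
    (hm : ∀ c ∈ m, 2 ≤ c) : SForest (k+1) (L+1) m :=
  match y with
  | Sum.inl ⟨rest, h⟩ => ⟨PlaneTree.node [] :: rest, by
      obtain ⟨h1, h2, h3, h4⟩ := h
      refine ⟨by simp [h1], fun t ht => ?_, ?_, ?_⟩
      · rcases List.mem_cons.1 ht with rfl | ht
        · rw [isSchroder_node]; simp
        · exact h2 t ht
      · simp [leaves_node, h3, Nat.add_comm]
      · simp [intDegs_node, h4]⟩
  | Sum.inr ⟨⟨j, hj⟩, ⟨l, h⟩⟩ => ⟨PlaneTree.node (l.take j) :: l.drop j, by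
      obtain ⟨h1, h2, h3, h4⟩ := h
      have h1' : l.length = k + j := h1
      have h4' : (l.map intDegs).sum = m.erase j := h4
      have hj2 : 2 ≤ j := hm j (Multiset.mem_toFinset.1 hj)
      have hjl : j ≤ l.length := by omega
      have hlen : (l.take j).length = j := by simp [List.length_take]; omega
      have hne : ¬ (l.take j).isEmpty := by
        rw [List.isEmpty_iff]; intro hc; rw [hc] at hlen; simp at hlen; omega
      refine ⟨?_, fun t ht => ?_, ?_, ?_⟩
      · simp only [List.length_cons, List.length_drop]; omega
      · rcases List.mem_cons.1 ht with rfl | ht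
        · rw [isSchroder_node]
          refine ⟨Or.inr (by rw [hlen]; exact hj2), fun u hu => h2 u (List.mem_of_mem_take hu)⟩
        · exact h2 t (List.mem_of_mem_drop ht)
      · rw [List.map_cons, List.sum_cons, leaves_node, if_neg hne]
        rw [← h3]
        conv_rhs => rw [← List.take_append_drop j l]
        simp [List.map_append]
      · rw [List.map_cons, List.sum_cons, intDegs_node, if_neg hne, hlen]
        have : (List.map intDegs (l.take j)).sum + (List.map intDegs (l.drop j)).sum
            = m.erase j := by
          rw [← h4']
          conv_rhs => rw [← List.take_append_drop j l]
          simp [List.map_append]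
        rw [add_assoc, this, Multiset.singleton_add,
          Multiset.cons_erase (Multiset.mem_toFinset.1 hj)]⟩

lemma sigma_eq_helper {k L : ℕ} {m : Multiset ℕ} {j₁ j₂ : ℕ} {h₁ : j₁ ∈ m.toFinset}
    {h₂ : j₂ ∈ m.toFinset} {x : SForest (k + j₁) (L+1) (m.erase j₁)}
    {y : SForest (k + j₂) (L+1) (m.erase j₂)} (hj : j₁ = j₂) (hl : x.1 = y.1) :
    (⟨⟨j₁, h₁⟩, x⟩ : Σ j : {x : ℕ // x ∈ m.toFinset}, SForest (k + j.1) (L+1) (m.erase j.1))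
      = ⟨⟨j₂, h₂⟩, y⟩ := by
  subst hj
  cases Subtype.ext hl
  rfl

def stepEquiv (hm : ∀ c ∈ m, 2 ≤ c) :
    SForest (k+1) (L+1) m ≃
      SForest k L m ⊕ (Σ j : {x : ℕ // x ∈ m.toFinset}, SForest (k + j.1) (L+1) (m.erase j.1)) where
  toFun := fwd
  invFun y := bwd y hm
  left_inv := by
    rintro ⟨l, h⟩
    rcases l with _ | ⟨⟨ts⟩, rest⟩
    · exact absurd h.1 (by simp)
    · rcases ts with _ | ⟨t0, ts'⟩
      · rfl
      · conv_lhs => whnf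
        apply Subtype.ext
        show PlaneTree.node (List.take (t0 :: ts').length ((t0 :: ts') ++ rest)) ::
            List.drop (t0 :: ts').length ((t0 :: ts') ++ rest) = PlaneTree.node (t0 :: ts') :: rest
        rw [List.take_left, List.drop_left]
  right_inv := by
    rintro (⟨rest, h⟩ | ⟨⟨j, hj⟩, ⟨l, h⟩⟩)
    · rfl
    · have hj2 : 2 ≤ j := hm j (Multiset.mem_toFinset.1 hj)
      have h1' : l.length = k + j := h.1
      have hjl : j ≤ l.length := by omega
      have hlen : (l.take j).length = j := by simp [List.length_take]; omega
      obtain ⟨A, B, hA, hB⟩ : ∃ A B, A.length = j ∧ A ++ B = l :=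
        ⟨l.take j, l.drop j, hlen, List.take_append_drop j l⟩
      subst hB
      subst hA
      have hne : ¬ ((A ++ B).take A.length).isEmpty := by
        rw [List.take_left, List.isEmpty_iff]
        rintro rfl
        simp at hj2
      conv_lhs => whnf
      cases instDecidableEqBool ((A ++ B).take A.length).isEmpty true with
      | isTrue hT => exact absurd hT hne
      | isFalse hF =>
        exact congrArg Sum.inr (sigma_eq_helper (by rw [List.take_left])
          (by show List.take A.length (A ++ B) ++ List.drop A.length (A ++ B) = A ++ B
              rw [List.take_left, List.drop_left]))

def prodF (m : Multiset ℕ) : ℕ := ∏ c ∈ m.toFinset, (m.count c).factorial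

lemma prodF_zero : prodF 0 = 1 := by simp [prodF]

lemma prodF_cons (a : ℕ) (m : Multiset ℕ) : prodF (a ::ₘ m) = (m.count a + 1) * prodF m := by
  unfold prodF
  rw [Multiset.toFinset_cons]
  by_cases ha : a ∈ m.toFinset
  · rw [Finset.insert_eq_self.2 ha]
    rw [← Finset.mul_prod_erase _ _ ha, ← Finset.mul_prod_erase _ _ ha]
    have h1 : ∀ c ∈ m.toFinset.erase a, ((a ::ₘ m).count c).factorial = (m.count c).factorial := by
      intro c hc
      rw [Multiset.count_cons_of_ne (Finset.ne_of_mem_erase hc)]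
    rw [Finset.prod_congr rfl h1, Multiset.count_cons_self, Nat.factorial_succ, mul_assoc]
  · have ha' : m.count a = 0 := by simpa [Multiset.count_eq_zero] using ha
    rw [Finset.prod_insert ha, Multiset.count_cons_self, ha']
    have h1 : ∀ c ∈ m.toFinset, ((a ::ₘ m).count c).factorial = (m.count c).factorial := by
      intro c hc
      rw [Multiset.count_cons_of_ne]
      rintro rfl; exact ha hc
    rw [Finset.prod_congr rfl h1]
    simp

lemma prodF_erase {j : ℕ} {m : Multiset ℕ} (hj : j ∈ m) :
    prodF m = m.count j * prodF (m.erase j) := by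
  conv_lhs => rw [← Multiset.cons_erase hj]
  rw [prodF_cons, Multiset.count_erase_self]
  congr 1
  have := Multiset.count_pos.2 hj
  omega

lemma nat_card_sigma {ι : Type*} [Fintype ι] (π : ι → Type*) [∀ i, Finite (π i)] :
    Nat.card (Σ i, π i) = ∑ i, Nat.card (π i) := by
  have := fun i => Fintype.ofFinite (π i)
  simp [Nat.card_eq_fintype_card]

lemma sum_count_mul (m : Multiset ℕ) : ∑ c ∈ m.toFinset, m.count c * c = m.sum := by
  have h := Finset.sum_multiset_map_count m (id : ℕ → ℕ)
  simp only [smul_eq_mul, id] at h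
  rw [← h]
  simp

lemma two_card_le_sum {m : Multiset ℕ} (hm : ∀ c ∈ m, 2 ≤ c) :
    2 * Multiset.card m ≤ m.sum := by
  have := Multiset.card_nsmul_le_sum (a := 2) hm
  simpa [mul_comm] using this

theorem forest_count (N : ℕ) : ∀ (k L : ℕ) (m : Multiset ℕ),
    L + Multiset.card m = N → (∀ c ∈ m, 2 ≤ c) → m.sum + k = L + Multiset.card m →
    Finite (SForest k L m) ∧
      Nat.card (SForest k L m) * (L.factorial * prodF m) =
        (if k = 0 then (if L = 0 then 1 else 0) else k * (N - 1).factorial) := by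
  induction N using Nat.strong_induction_on with
  | _ N IH =>
  intro k L m hN hm hsum
  rcases k with _ | k0
  · -- k = 0
    rcases Nat.eq_zero_or_pos L with rfl | hL
    · -- L = 0
      have hm0 : m = 0 := by
        have h2 := two_card_le_sum hm
        have : Multiset.card m = 0 := by omega
        exact Multiset.card_eq_zero.1 this
      subst hm0
      have huniq : ∀ x : SForest 0 0 0, x = ⟨[], by simp⟩ := by
        rintro ⟨l, hl⟩
        exact Subtype.ext (List.length_eq_zero_iff.1 hl.1)
      haveI : Unique (SForest 0 0 0) := ⟨⟨⟨[], by simp⟩⟩, huniq⟩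
      refine ⟨inferInstance, ?_⟩
      rw [Nat.card_unique]
      simp [prodF_zero]
    · -- L > 0
      haveI : IsEmpty (SForest 0 L m) := by
        constructor
        rintro ⟨l, h1, h2, h3, h4⟩
        rw [List.length_eq_zero_iff.1 h1] at h3
        simp at h3
        omega
      refine ⟨inferInstance, ?_⟩
      rw [Nat.card_of_isEmpty]
      simp only [if_pos rfl, if_neg (by omega : ¬ L = 0)]
      simp
  · -- k = k0 + 1
    rcases L with _ | L0
    · -- L = 0 : contradiction with hypotheses
      exfalso
      have h2 := two_card_le_sum hm
      omega
    · -- L = L0 + 1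
      have hN1 : L0 + Multiset.card m = N - 1 := by omega
      have hNpos : 1 ≤ N := by omega
      have hleaf := IH (N-1) (by omega) k0 L0 m hN1 hm (by omega)
      have hint : ∀ j ∈ m.toFinset,
          Finite (SForest (k0 + j) (L0+1) (m.erase j)) ∧
          Nat.card (SForest (k0 + j) (L0+1) (m.erase j)) * ((L0+1).factorial * prodF (m.erase j))
            = (if k0 + j = 0 then (if L0+1 = 0 then 1 else 0) else (k0 + j) * ((N-1) - 1).factorial) := by
        intro j hj
        have hjm : j ∈ m := Multiset.mem_toFinset.1 hj
        have hcard : Multiset.card (m.erase j) = Multiset.card m - 1 := Multiset.card_erase_of_mem hjm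
        have hcardpos : 0 < Multiset.card m := Multiset.card_pos_iff_exists_mem.2 ⟨j, hjm⟩
        have hsumerase : (m.erase j).sum + j = m.sum := by
          conv_rhs => rw [← Multiset.cons_erase hjm]
          simp [add_comm]
        have hjle : j ≤ m.sum := by omega
        apply IH (N-1) (by omega) (k0 + j) (L0+1) (m.erase j) (by omega)
          (fun c hc => hm c (Multiset.mem_of_mem_erase hc)) (by omega)
      haveI Fleaf : Finite (SForest k0 L0 m) := hleaf.1
      haveI Fint : ∀ j : {x : ℕ // x ∈ m.toFinset},
          Finite (SForest (k0 + j.1) (L0+1) (m.erase j.1)) := fun j => (hint j.1 j.2).1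
      have E := stepEquiv (k := k0) (L := L0) hm
      haveI : Finite (SForest (k0+1) (L0+1) m) := Finite.of_equiv _ E.symm
      refine ⟨inferInstance, ?_⟩
      have hcards : Nat.card (SForest (k0+1) (L0+1) m)
          = Nat.card (SForest k0 L0 m)
            + ∑ c ∈ m.toFinset, Nat.card (SForest (k0 + c) (L0+1) (m.erase c)) := by
        rw [Nat.card_congr E, Nat.card_sum, nat_card_sigma]
        congr 1
        exact Finset.sum_coe_sort m.toFinset
          (fun c => Nat.card (SForest (k0 + c) (L0+1) (m.erase c)))
      rw [hcards, add_mul, Finset.sum_mul]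
      have hterm : ∀ c ∈ m.toFinset,
          Nat.card (SForest (k0 + c) (L0+1) (m.erase c)) * ((L0+1).factorial * prodF m)
            = m.count c * ((k0 + c) * (N - 2).factorial) := by
        intro c hc
        have hc2 : 2 ≤ c := hm c (Multiset.mem_toFinset.1 hc)
        have h2 := (hint c hc).2
        rw [if_neg (by omega : ¬ (k0 + c = 0))] at h2
        have : (N - 1) - 1 = N - 2 := by omega
        rw [this] at h2
        rw [prodF_erase (Multiset.mem_toFinset.1 hc)]
        calc Nat.card (SForest (k0 + c) (L0+1) (m.erase c))
              * ((L0+1).factorial * (m.count c * prodF (m.erase c)))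
            = m.count c * (Nat.card (SForest (k0 + c) (L0+1) (m.erase c))
              * ((L0+1).factorial * prodF (m.erase c))) := by ring
          _ = m.count c * ((k0 + c) * (N - 2).factorial) := by rw [h2]
      rw [Finset.sum_congr rfl hterm]
      have hsum2 : ∑ c ∈ m.toFinset, m.count c * ((k0 + c) * (N - 2).factorial)
          = (k0 * Multiset.card m + m.sum) * (N - 2).factorial := by
        calc ∑ c ∈ m.toFinset, m.count c * ((k0 + c) * (N-2).factorial)
            = ∑ c ∈ m.toFinset, (m.count c * k0 + m.count c * c) * (N-2).factorial := by
              apply Finset.sum_congr rfl; intro c _; ring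
          _ = (∑ c ∈ m.toFinset, (m.count c * k0 + m.count c * c)) * (N-2).factorial := by
              rw [Finset.sum_mul]
          _ = (k0 * Multiset.card m + m.sum) * (N-2).factorial := by
              congr 1
              rw [Finset.sum_add_distrib, ← Finset.sum_mul, Multiset.toFinset_sum_count_eq,
                sum_count_mul]
              ring
      rw [hsum2]
      have hNN : (N - 1) - 1 = N - 2 := by omega
      rw [hNN] at hleaf
      have hleafterm : Nat.card (SForest k0 L0 m) * ((L0+1).factorial * prodF m)
          = (L0+1) * (if k0 = 0 then (if L0 = 0 then 1 else 0) else k0 * (N-2).factorial) := by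
        rw [← hleaf.2, Nat.factorial_succ]
        ring
      rw [hleafterm]
      rw [if_neg (by omega : ¬ (k0 + 1 = 0))]
      rcases Nat.eq_zero_or_pos k0 with rfl | hk0
      · rw [if_pos rfl]
        rcases Nat.eq_zero_or_pos L0 with rfl | hL0
        · -- k0 = 0, L0 = 0 : m = 0, N = 1
          have hm0 : m = 0 := by
            have h2 := two_card_le_sum hm
            have : Multiset.card m = 0 := by omega
            exact Multiset.card_eq_zero.1 this
          subst hm0
          simp only [Multiset.card_zero, Multiset.sum_zero] at hN ⊢
          have : N = 1 := by omega
          subst this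
          simp
        · rw [if_neg (by omega : ¬ L0 = 0)]
          have hNsum : m.sum = N - 1 := by omega
          have hN2 : 2 ≤ N := by omega
          obtain ⟨M, rfl⟩ : ∃ M, N = M + 2 := ⟨N - 2, by omega⟩
          have hms : m.sum = M + 1 := by omega
          simp only [hms, Nat.add_sub_cancel, Nat.succ_sub_one]
          show (L0 + 1) * 0 + (0 * Multiset.card m + (M + 1)) * M.factorial
              = 1 * (M + 1).factorial
          rw [Nat.factorial_succ]
          ring
      · rw [if_neg (by omega : ¬ k0 = 0)]
        have hN2 : 2 ≤ N := by omega
        obtain ⟨M, rfl⟩ : ∃ M, N = M + 2 := ⟨N - 2, by omega⟩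
        have hms : m.sum + k0 = M + 1 := by omega
        have hcd : L0 + 1 + Multiset.card m = M + 2 := by omega
        simp only [Nat.add_sub_cancel, Nat.succ_sub_one]
        show (L0 + 1) * (k0 * M.factorial)
            + (k0 * Multiset.card m + m.sum) * M.factorial = (k0 + 1) * (M + 1).factorial
        rw [Nat.factorial_succ]
        zify at hcd hms ⊢
        linear_combination (k0 * (M.factorial : ℤ)) * hcd + (M.factorial : ℤ) * hms

/-- Fix `n ≥ 2` and nonnegative integers `r₃, …, r_n` with
`Σ_{i=3}^n (i−2)·r_i = n−2`, and put `|r| = Σ_{i=3}^n r_i`.  The number of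
Schröder trees on `n−1` leaves having exactly `r_i` internal vertices with
`i−1` children (i.e. of degree `i`), for each `3 ≤ i ≤ n`, equals
`(n+|r|−2)! / ((n−1)!·r₃!···r_n!)`. -/
theorem schroder_tree_type_count (n : ℕ) (hn : 2 ≤ n) (r : ℕ → ℕ)
    (hr : ∑ i ∈ Finset.Icc 3 n, (i - 2) * r i = n - 2) :
    Nat.card {T : PlaneTree // T.isSchroder ∧ T.leaves = n - 1 ∧
        ∀ i, 3 ≤ i → i ≤ n → T.countDeg i = r i} =
      Nat.factorial (n + (∑ i ∈ Finset.Icc 3 n, r i) - 2) /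
        (Nat.factorial (n - 1) * ∏ i ∈ Finset.Icc 3 n, Nat.factorial (r i)) := by
  classical
  set R := ∑ i ∈ Finset.Icc 3 n, r i with hR
  set M₀ := ∑ i ∈ Finset.Icc 3 n, Multiset.replicate (r i) (i-1) with hM₀def
  have hmemM : ∀ c ∈ M₀, ∃ i, 3 ≤ i ∧ i ≤ n ∧ c = i - 1 := by
    intro c hc
    rw [hM₀def, Multiset.mem_sum] at hc
    obtain ⟨i, hi, hci⟩ := hc
    rw [Finset.mem_Icc] at hi
    exact ⟨i, hi.1, hi.2, Multiset.eq_of_mem_replicate hci⟩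
  have hm2 : ∀ c ∈ M₀, 2 ≤ c := by
    intro c hc; obtain ⟨i, h3, _, rfl⟩ := hmemM c hc; omega
  have hcount : ∀ c, Multiset.count c M₀
      = ∑ i ∈ Finset.Icc 3 n, (if i - 1 = c then r i else 0) := by
    intro c
    rw [hM₀def, Multiset.count_sum']
    apply Finset.sum_congr rfl
    intro i _
    rw [Multiset.count_replicate]
  have hcount' : ∀ i, 3 ≤ i → i ≤ n → Multiset.count (i-1) M₀ = r i := by
    intro i0 h3 hn0
    rw [hcount]
    have : ∀ i ∈ Finset.Icc 3 n, (if i - 1 = i0 - 1 then r i else 0)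
        = (if i = i0 then r i else 0) := by
      intro i hi
      rw [Finset.mem_Icc] at hi
      by_cases h : i = i0
      · subst h; simp
      · rw [if_neg h, if_neg (by omega)]
    rw [Finset.sum_congr rfl this, Finset.sum_ite_eq' (Finset.Icc 3 n) i0 r,
      if_pos (Finset.mem_Icc.2 ⟨h3, hn0⟩)]
  have hcard : Multiset.card M₀ = R := by
    rw [hM₀def, Multiset.card_sum, hR]
    apply Finset.sum_congr rfl
    intro i _
    rw [Multiset.card_replicate]
  have hsumM : M₀.sum = (n - 2) + R := by
    have h1 : M₀.sum = ∑ i ∈ Finset.Icc 3 n, (Multiset.replicate (r i) (i-1)).sum := by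
      rw [hM₀def]
      exact map_sum Multiset.sumAddMonoidHom _ _
    rw [h1]
    have h2 : ∀ i ∈ Finset.Icc 3 n, (Multiset.replicate (r i) (i-1)).sum
        = (i - 2) * r i + r i := by
      intro i hi
      rw [Finset.mem_Icc] at hi
      rw [Multiset.sum_replicate, smul_eq_mul]
      have : i - 1 = (i - 2) + 1 := by omega
      rw [this]
      ring
    rw [Finset.sum_congr rfl h2, Finset.sum_add_distrib, hr, hR]
  have hsetEq : ∀ T : PlaneTree, T.isSchroder → T.leaves = n - 1 →
      ((∀ i, 3 ≤ i → i ≤ n → T.countDeg i = r i) ↔ T.intDegs = M₀) := by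
    intro T hS hL
    constructor
    · intro hcnt
      rw [Multiset.ext]
      intro c
      by_cases hc2 : 2 ≤ c
      · by_cases hcn : c + 1 ≤ n
        · have h1 : T.countDeg (c+1) = r (c+1) := hcnt (c+1) (by omega) hcn
          rw [countDeg_eq_count (c+1) (by omega)] at h1
          simp only [Nat.add_sub_cancel] at h1
          have h2 := hcount' (c+1) (by omega) hcn
          simp only [Nat.add_sub_cancel] at h2
          rw [h1, h2]
        · have hnot : c ∉ T.intDegs := by
            intro hmem
            have hsum := PlaneTree.sum_intDegs T
            have hme : c ::ₘ T.intDegs.erase c = T.intDegs := Multiset.cons_erase hmem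
            have h2' : 2 * Multiset.card (T.intDegs.erase c) ≤ (T.intDegs.erase c).sum :=
              two_card_le_sum (fun x hx =>
                schroder_intDegs hS x (Multiset.mem_of_mem_erase hx))
            have hs : c + (T.intDegs.erase c).sum = T.intDegs.sum := by
              conv_rhs => rw [← hme]
              simp
            have hcic : Multiset.card (T.intDegs.erase c) + 1 = Multiset.card T.intDegs := by
              conv_rhs => rw [← hme]
              simp
            rw [hL] at hsum
            omega
          rw [Multiset.count_eq_zero.2 hnot]
          symm
          rw [Multiset.count_eq_zero]
          intro hmem
          obtain ⟨i, h3, hn', rfl⟩ := hmemM c hmem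
          omega
      · rw [Multiset.count_eq_zero.2 (fun hmem => hc2 (schroder_intDegs hS c hmem)),
          Multiset.count_eq_zero.2 (fun hmem => by
            obtain ⟨i, h3, hn', rfl⟩ := hmemM c hmem; omega)]
    · intro hEq i h3 hn'
      rw [countDeg_eq_count i (by omega), hEq, hcount' i h3 hn']
  have hEquiv : {T : PlaneTree // T.isSchroder ∧ T.leaves = n - 1 ∧
        ∀ i, 3 ≤ i → i ≤ n → T.countDeg i = r i} ≃ SForest 1 (n-1) M₀ :=
    { toFun := fun x => ⟨[x.1], by
        refine ⟨rfl, ?_, ?_, ?_⟩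
        · intro t ht
          rw [List.mem_singleton] at ht
          subst ht
          exact x.2.1
        · simp [x.2.2.1]
        · simpa using (hsetEq x.1 x.2.1 x.2.2.1).1 x.2.2.2⟩,
      invFun := fun y => match y with
        | ⟨[], h⟩ => absurd h.1 (by simp)
        | ⟨[T], h⟩ => ⟨T, by
            have hS : T.isSchroder := h.2.1 T (by simp)
            have hL : T.leaves = n - 1 := by simpa using h.2.2.1
            have hI : T.intDegs = M₀ := by simpa using h.2.2.2
            exact ⟨hS, hL, (hsetEq T hS hL).2 hI⟩⟩
        | ⟨_ :: _ :: _, h⟩ => absurd h.1 (by simp),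
      left_inv := fun x => rfl,
      right_inv := by
        rintro ⟨l, h⟩
        rcases l with _ | ⟨T, _ | ⟨T2, rest⟩⟩
        · exact absurd h.1 (by simp)
        · rfl
        · exact absurd h.1 (by simp) }
  have hforest := forest_count ((n-1) + R) 1 (n-1) M₀ (by rw [hcard]) hm2
    (by rw [hcard, hsumM]; omega)
  haveI := hforest.1
  have hcardEq := hforest.2
  rw [if_neg one_ne_zero, one_mul] at hcardEq
  have hprod : prodF M₀ = ∏ i ∈ Finset.Icc 3 n, (r i).factorial := by
    have himg : M₀.toFinset
        = ((Finset.Icc 3 n).filter (fun i => r i ≠ 0)).image (fun i => i - 1) := by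
      ext c
      simp only [Multiset.mem_toFinset, Finset.mem_image, Finset.mem_filter, Finset.mem_Icc]
      constructor
      · intro hc
        obtain ⟨i, h3, hn', rfl⟩ := hmemM c hc
        refine ⟨i, ⟨⟨h3, hn'⟩, ?_⟩, rfl⟩
        intro h0
        have hp := Multiset.count_pos.2 hc
        rw [hcount' i h3 hn', h0] at hp
        omega
      · rintro ⟨i, ⟨⟨h3, hn'⟩, hr0⟩, rfl⟩
        rw [← Multiset.count_pos, hcount' i h3 hn']
        omega
    rw [prodF, himg, Finset.prod_image (by
      intro x hx y hy hxy
      simp only [Finset.coe_filter, Set.mem_setOf_eq, Finset.mem_Icc] at hx hy hxy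
      omega)]
    have hc2 : ∀ i ∈ (Finset.Icc 3 n).filter (fun i => r i ≠ 0),
        (Multiset.count (i - 1) M₀).factorial = (r i).factorial := by
      intro i hi
      simp only [Finset.mem_filter, Finset.mem_Icc] at hi
      rw [hcount' i hi.1.1 hi.1.2]
    rw [Finset.prod_congr rfl hc2]
    apply Finset.prod_subset (Finset.filter_subset _ _)
    intro x _ hx
    simp only [Finset.mem_filter, not_and, not_not] at hx
    by_cases hxm : x ∈ Finset.Icc 3 n
    · rw [hx hxm, Nat.factorial_zero]
    · exact absurd ‹x ∈ Finset.Icc 3 n› hxm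
  rw [hprod] at hcardEq
  have hNN : (n - 1 + R) - 1 = n + R - 2 := by omega
  rw [hNN] at hcardEq
  have hpos : 0 < (n-1).factorial * ∏ i ∈ Finset.Icc 3 n, (r i).factorial :=
    Nat.mul_pos (Nat.factorial_pos _) (Finset.prod_pos fun i _ => Nat.factorial_pos _)
  rw [Nat.card_congr hEquiv, ← hcardEq, Nat.mul_div_cancel _ hpos]
end

section
/- For every n ≥ 1 and every k ≥ 0, the number of contracted Grassmannian forests of type (k,n) with mom-dimension 0 equals the binomial coefficient C(n,k). (Assuming the conjectural boundary description of the momentum amplituhedron, this is the number of 0-dimensional boundary strata of M_{n,k}.) -/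
/-- Plane trees whose internal vertices carry an integer helicity: an `HTree`
is either a leaf or a node with a helicity and a list of subtrees. -/
inductive HTree : Type where
  | leaf : HTree
  | node : ℕ → List HTree → HTree

namespace HTree

/-- The number of leaves. -/
def leaves : HTree → ℕ
  | leaf => 1
  | node _ ts => (ts.attach.map (fun t => leaves t.1)).sum
decreasing_by have := List.sizeOf_lt_of_mem t.2; simp only [HTree.node.sizeOf_spec]; omega

/-- A helicity-decorated tree encodes a contracted Grassmannian tree when:
every internal vertex `v` has at least two children (Schröder condition),
its helicity satisfies `1 ≤ h(v) ≤ d(v) − 1 = c(v)`, and no two adjacent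
internal vertices are both white (`h = 1`) or both black (`h = d − 1 = c`). -/
def valid : HTree → Prop
  | leaf => True
  | node h ts => 2 ≤ ts.length ∧ 1 ≤ h ∧ h ≤ ts.length ∧ (∀ t ∈ ts, valid t) ∧
      (∀ t ∈ ts, ∀ h' ts', t = node h' ts' →
        ¬(h = 1 ∧ h' = 1) ∧ ¬(h = ts.length ∧ h' = ts'.length))
decreasing_by have := List.sizeOf_lt_of_mem ‹_ ∈ ts›; simp only [HTree.node.sizeOf_spec]; omega

/-- `Σ_v (h(v) − 1)` over internal vertices; the helicity of a contracted
Grassmannian tree on `n ≥ 3` boundary vertices encoded by `T` is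
`k = 1 + hsum T`. -/
def hsum : HTree → ℕ
  | leaf => 0
  | node h ts => (h - 1) + (ts.attach.map (fun t => hsum t.1)).sum
decreasing_by have := List.sizeOf_lt_of_mem t.2; simp only [HTree.node.sizeOf_spec]; omega

/-- `Σ_v (m(v) − 1)` over internal vertices, where `m(v) = d(v) − 1 = c(v)`
if `v` is white or black and `m(v) = 2d(v) − 4 = 2c(v) − 2` if `v` is
generic; the mom-dimension of a contracted Grassmannian tree on `n ≥ 3`
boundary vertices encoded by `T` is `r = 1 + msum T`. -/
def msum : HTree → ℕ
  | leaf => 0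
  | node h ts =>
      ((if h = 1 ∨ h = ts.length then ts.length else 2 * ts.length - 2) - 1)
        + (ts.attach.map (fun t => msum t.1)).sum
decreasing_by have := List.sizeOf_lt_of_mem t.2; simp only [HTree.node.sizeOf_spec]; omega

end HTree

/-- The number of contracted Grassmannian trees of type `(k, n)` with
mom-dimension `r`: for `n = 1` there are exactly two boundary leaves, of
helicities `0` and `1` and mom-dimension `0`; for `n = 2` exactly one bare
edge, of helicity `1` and mom-dimension `1`; and for `n ≥ 3` they are encoded
by valid helicity-decorated Schröder trees on `n − 1` leaves. -/
noncomputable def grassTreeCount (n k r : ℕ) : ℕ :=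
  if n = 1 then (if k ≤ 1 ∧ r = 0 then 1 else 0)
  else if n = 2 then (if k = 1 ∧ r = 1 then 1 else 0)
  else Nat.card {T : HTree // T.valid ∧ T.leaves = n - 1 ∧ 1 + T.hsum = k ∧ 1 + T.msum = r}

/-- `T` encodes a contracted Grassmannian tree on `m` boundary vertices:
for `m = 1`, a boundary leaf of helicity `0` or `1` (encoded as a childless
node `HTree.node h []`); for `m = 2`, a bare edge (encoded as `HTree.leaf`);
for `m ≥ 3`, a valid helicity-decorated Schröder tree on `m − 1` leaves. -/
def gvalid (m : ℕ) (T : HTree) : Prop :=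
  if m = 1 then (T = HTree.node 0 [] ∨ T = HTree.node 1 [])
  else if m = 2 then T = HTree.leaf
  else T.valid ∧ T.leaves = m - 1

/-- The helicity of a contracted Grassmannian tree on `m` boundary vertices. -/
def gHel (m : ℕ) (T : HTree) : ℕ :=
  if m = 1 then (match T with | HTree.node h _ => h | _ => 0)
  else if m = 2 then 1 else 1 + T.hsum

/-- The mom-dimension of a contracted Grassmannian tree on `m` boundary
vertices. -/
def gDim (m : ℕ) (T : HTree) : ℕ :=
  if m = 1 then 0 else if m = 2 then 1 else 1 + T.msum

/-- A contracted Grassmannian forest on `n` boundary vertices: a noncrossing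
partition `F.1` of `[n]` together with, for each block `B`, a contracted
Grassmannian tree `F.2 B` on `#B` boundary vertices (the assignment is
normalised to `HTree.leaf` off the blocks). -/
def IsGForest {n : ℕ} (F : Finset (Finset (Fin n)) × (Finset (Fin n) → HTree)) : Prop :=
  IsNCPartition F.1 ∧ (∀ B ∈ F.1, gvalid B.card (F.2 B)) ∧ (∀ B ∉ F.1, F.2 B = HTree.leaf)

/-- The helicity of a forest: the sum of the helicities of its trees. -/
def forestHel {n : ℕ} (F : Finset (Finset (Fin n)) × (Finset (Fin n) → HTree)) : ℕ :=
  ∑ B ∈ F.1, gHel B.card (F.2 B)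

/-- The mom-dimension of a forest: the sum of the mom-dimensions of its
trees. -/
def forestDim {n : ℕ} (F : Finset (Finset (Fin n)) × (Finset (Fin n) → HTree)) : ℕ :=
  ∑ B ∈ F.1, gDim B.card (F.2 B)

open scoped Classical

/-- The partition of `Fin n` into singletons. -/
noncomputable def P0 (n : ℕ) : Finset (Finset (Fin n)) :=
  Finset.univ.image (fun i => {i})

lemma mem_P0 {n : ℕ} {B : Finset (Fin n)} : B ∈ P0 n ↔ ∃ i, B = {i} := by
  simp [P0, eq_comm]

lemma P0_nc (n : ℕ) : IsNCPartition (P0 n) := by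
  refine ⟨?_, ?_, ?_⟩
  · intro B hB; obtain ⟨i, rfl⟩ := mem_P0.mp hB; exact ⟨i, by simp⟩
  · intro i
    refine ⟨{i}, ⟨mem_P0.mpr ⟨i, rfl⟩, by simp⟩, ?_⟩
    rintro B ⟨hB, hiB⟩
    obtain ⟨j, rfl⟩ := mem_P0.mp hB
    simp at hiB; subst hiB; rfl
  · intro a b c d hab hbc hcd B hB B' hB' ha hc hb hd
    obtain ⟨i, rfl⟩ := mem_P0.mp hB
    simp only [Finset.mem_singleton] at ha hc
    have : a = c := ha.trans hc.symm
    exact absurd (this ▸ (hab.trans hbc)) (lt_irrefl _)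

lemma gvalid_one {T : HTree} : gvalid 1 T ↔ T = HTree.node 0 [] ∨ T = HTree.node 1 [] := by
  simp [gvalid]

lemma gHel_one (h : ℕ) (l : List HTree) : gHel 1 (HTree.node h l) = h := by
  simp [gHel]

lemma gDim_one (T : HTree) : gDim 1 T = 0 := by simp [gDim]

lemma card_eq_one_of_gDim_zero {n : ℕ} {B : Finset (Fin n)} {T : HTree}
    (hB : B.Nonempty) (h0 : gDim B.card T = 0) : B.card = 1 := by
  have h1 : 1 ≤ B.card := Finset.card_pos.mpr hB
  unfold gDim at h0
  split_ifs at h0 with h2 h3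
  · exact h2
  all_goals omega

lemma forest_fst_eq {n : ℕ} (F : Finset (Finset (Fin n)) × (Finset (Fin n) → HTree))
    (hF : IsGForest F) (hd : forestDim F = 0) : F.1 = P0 n := by
  have hcard : ∀ B ∈ F.1, B.card = 1 := by
    intro B hB
    have h0 : gDim B.card (F.2 B) = 0 := (Finset.sum_eq_zero_iff.mp hd) B hB
    exact card_eq_one_of_gDim_zero (hF.1.1 B hB) h0
  apply Finset.Subset.antisymm
  · intro B hB
    obtain ⟨i, hi⟩ := Finset.card_eq_one.mp (hcard B hB)
    exact mem_P0.mpr ⟨i, hi⟩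
  · intro B hB
    obtain ⟨i, rfl⟩ := mem_P0.mp hB
    obtain ⟨C, ⟨hC, hiC⟩, _⟩ := hF.1.2.1 i
    obtain ⟨j, rfl⟩ := Finset.card_eq_one.mp (hcard C hC)
    simp only [Finset.mem_singleton] at hiC
    subst hiC; exact hC

lemma forest_tree_dichotomy {n : ℕ} (F : Finset (Finset (Fin n)) × (Finset (Fin n) → HTree))
    (hF : IsGForest F) (hd : forestDim F = 0) (i : Fin n) :
    F.2 {i} = HTree.node 0 [] ∨ F.2 {i} = HTree.node 1 [] := by
  have hmem : ({i} : Finset (Fin n)) ∈ F.1 := by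
    rw [forest_fst_eq F hF hd]; exact mem_P0.mpr ⟨i, rfl⟩
  have := hF.2.1 _ hmem
  rw [Finset.card_singleton] at this
  exact gvalid_one.mp this

/-- **The `0`-dimensional strata.**  For every `n ≥ 1` and every `k`, the
number of contracted Grassmannian forests of type `(k, n)` with
mom-dimension `0` equals the binomial coefficient `C(n, k)`.  (Assuming the
conjectural boundary description of the momentum amplituhedron, this is the
number of `0`-dimensional boundary strata of `M_{n,k}`.) -/
theorem grassmannian_forest_dim_zero_count (n k : ℕ) (hn : 1 ≤ n) :
    Nat.card {F : Finset (Finset (Fin n)) × (Finset (Fin n) → HTree) //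
        IsGForest F ∧ forestHel F = k ∧ forestDim F = 0} =
      Nat.choose n k := by
  have hsing : Function.Injective (fun i : Fin n => ({i} : Finset (Fin n))) :=
    fun a b h => Finset.singleton_injective h
  -- helicity of any forest equals the number of `node 1 []` singleton trees
  have hhel : ∀ F : Finset (Finset (Fin n)) × (Finset (Fin n) → HTree),
      IsGForest F → forestDim F = 0 →
      forestHel F = (Finset.univ.filter (fun i => F.2 {i} = HTree.node 1 [])).card := by
    intro F hF hd
    rw [forestHel, forest_fst_eq F hF hd, P0, Finset.sum_image (fun a _ b _ h => hsing h),
      Finset.card_filter]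
    apply Finset.sum_congr rfl
    intro i _
    rcases forest_tree_dichotomy F hF hd i with h1 | h1 <;>
      rw [Finset.card_singleton, h1] <;> simp [gHel_one]
  have e : {F : Finset (Finset (Fin n)) × (Finset (Fin n) → HTree) //
        IsGForest F ∧ forestHel F = k ∧ forestDim F = 0} ≃
      {S : Finset (Fin n) // S.card = k} := by
    refine
      { toFun := fun F => ⟨Finset.univ.filter (fun i => F.1.2 {i} = HTree.node 1 []), ?_⟩
        invFun := fun S => ⟨(P0 n, fun B => if B ∈ P0 n then
            (if B ⊆ S.1 then HTree.node 1 [] else HTree.node 0 []) else HTree.leaf), ?_⟩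
        left_inv := ?_
        right_inv := ?_ }
    · rw [← hhel F.1 F.2.1 F.2.2.2]; exact F.2.2.1
    · have hforest : IsGForest ((P0 n, fun B => if B ∈ P0 n then
          (if B ⊆ S.1 then HTree.node 1 [] else HTree.node 0 []) else HTree.leaf) :
          Finset (Finset (Fin n)) × (Finset (Fin n) → HTree)) := by
        refine ⟨P0_nc n, ?_, ?_⟩
        · intro B hB
          obtain ⟨i, rfl⟩ := mem_P0.mp hB
          rw [Finset.card_singleton]
          simp only [if_pos hB]
          rw [gvalid_one]
          split_ifs <;> simp
        · intro B hB
          simp only [if_neg hB]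
      have hdim0 : forestDim ((P0 n, fun B => if B ∈ P0 n then
          (if B ⊆ S.1 then HTree.node 1 [] else HTree.node 0 []) else HTree.leaf) :
          Finset (Finset (Fin n)) × (Finset (Fin n) → HTree)) = 0 := by
        rw [forestDim]
        apply Finset.sum_eq_zero
        intro B hB
        obtain ⟨i, rfl⟩ := mem_P0.mp hB
        rw [Finset.card_singleton, gDim_one]
      refine ⟨hforest, ?_, hdim0⟩
      · refine (hhel _ hforest hdim0).trans (Eq.trans ?_ S.2)
        congr 1
        ext i
        simp only [Finset.mem_filter, Finset.mem_univ, true_and]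
        rw [if_pos (mem_P0.mpr ⟨i, rfl⟩)]
        constructor
        · intro h
          by_contra hi
          rw [if_neg (by simpa using hi)] at h
          simp at h
        · intro h
          rw [if_pos (by simpa using h)]
    · rintro ⟨F, hF, hk, hd⟩
      apply Subtype.ext
      dsimp only
      refine Prod.ext ((forest_fst_eq F hF hd).symm) ?_
      funext B
      dsimp only
      by_cases hB : B ∈ P0 n
      · obtain ⟨i, rfl⟩ := mem_P0.mp hB
        rw [if_pos hB]
        by_cases hi : F.2 {i} = HTree.node 1 []
        · rw [if_pos (by simp [hi]), hi]
        · rcases forest_tree_dichotomy F hF hd i with h1 | h1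
          · rw [if_neg (by simp [hi]), h1]
          · exact absurd h1 hi
      · rw [if_neg hB]
        exact (hF.2.2 B (by rwa [forest_fst_eq F hF hd])).symm
    · rintro ⟨S, hS⟩
      apply Subtype.ext
      dsimp only
      ext i
      simp only [Finset.mem_filter, Finset.mem_univ, true_and]
      rw [if_pos (mem_P0.mpr ⟨i, rfl⟩)]
      constructor
      · intro h
        by_contra hi
        rw [if_neg (by simpa using hi)] at h
        simp at h
      · intro h
        rw [if_pos (by simpa using h)]
  rw [Nat.card_congr e, Nat.card_eq_fintype_card, Fintype.card_finset_len,
    Fintype.card_fin]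
end

section
/- For every n ≥ 1, every k, and every r, the number of contracted Grassmannian trees of type (k,n) with mom-dimension r equals the number of contracted Grassmannian trees of type (n−k,n) with mom-dimension r. An explicit bijection is obtained by replacing the helicity h(v) of each internal vertex v by d(v) − h(v) (which swaps white and black vertices, preserves contractedness and mom-dimension, and sends helicity k to n−k). -/
namespace HTree

/-- The helicity flip: replace the helicity `h(v)` of every internal vertex
by `d(v) − h(v) = c(v) + 1 − h(v)` (this swaps white and black vertices). -/
def flip : HTree → HTree
  | leaf => leaf
  | node h ts => node (ts.length + 1 - h) (ts.attach.map (fun t => flip t.1))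
decreasing_by have := List.sizeOf_lt_of_mem t.2; simp only [HTree.node.sizeOf_spec]; omega

end HTree

namespace HTree

theorem leaves_node (h : ℕ) (ts : List HTree) :
    leaves (node h ts) = (ts.map leaves).sum := by
  rw [leaves]; simp [List.map_attach_eq_pmap]

theorem hsum_node (h : ℕ) (ts : List HTree) :
    hsum (node h ts) = (h - 1) + (ts.map hsum).sum := by
  rw [hsum]; simp [List.map_attach_eq_pmap]

theorem msum_node (h : ℕ) (ts : List HTree) :
    msum (node h ts) =
      ((if h = 1 ∨ h = ts.length then ts.length else 2 * ts.length - 2) - 1)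
        + (ts.map msum).sum := by
  rw [msum]; simp [List.map_attach_eq_pmap]

theorem flip_node (h : ℕ) (ts : List HTree) :
    flip (node h ts) = node (ts.length + 1 - h) (ts.map flip) := by
  rw [flip]; simp [List.map_attach_eq_pmap]

theorem sum_map_add_one (l : List HTree) (f g : HTree → ℕ) :
    (l.map (fun x => f x + g x + 1)).sum = (l.map f).sum + (l.map g).sum + l.length := by
  induction l with
  | nil => simp
  | cons a l ih => simp [ih]; omega

theorem leaves_flip : ∀ T : HTree, T.flip.leaves = T.leaves
  | leaf => by rw [flip]
  | node h ts => by
    rw [flip_node, leaves_node, leaves_node, List.map_map]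
    simp only [Function.comp_def]
    congr 1
    refine List.map_congr_left fun t ht => ?_
    exact leaves_flip t
termination_by T => sizeOf T
decreasing_by
  have := List.sizeOf_lt_of_mem ht; simp only [HTree.node.sizeOf_spec]; omega

theorem flip_main : ∀ T : HTree, T.valid →
    T.flip.valid ∧ T.flip.flip = T ∧ T.flip.msum = T.msum ∧
      T.hsum + T.flip.hsum + 1 = T.leaves
  | leaf, _ => by
    constructor
    · rw [flip, valid]; trivial
    refine ⟨by rw [flip, flip], by rw [flip], ?_⟩
    rw [flip, hsum, leaves]
  | node h ts, hv => by
    rw [valid] at hv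
    obtain ⟨hlen, hh1, hh2, hval, hadj⟩ := hv
    have IH : ∀ t ∈ ts, (flip t).valid ∧ (flip t).flip = t ∧
        (flip t).msum = t.msum ∧ t.hsum + (flip t).hsum + 1 = t.leaves :=
      fun t ht => flip_main t (hval t ht)
    refine ⟨?_, ?_, ?_, ?_⟩
    · rw [flip_node, valid]
      simp only [List.length_map]
      refine ⟨hlen, by omega, by omega, ?_, ?_⟩
      · intro t ht
        obtain ⟨s, hs, rfl⟩ := List.mem_map.mp ht
        exact (IH s hs).1
      · intro t ht h' ts' hteq
        obtain ⟨s, hs, rfl⟩ := List.mem_map.mp ht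
        cases s with
        | leaf => rw [flip] at hteq; exact absurd hteq (by simp)
        | node g us =>
          rw [flip_node] at hteq
          injection hteq with e1 e2
          have hsv := hval _ hs
          rw [valid] at hsv
          obtain ⟨hl2, hg1, hg2, -, -⟩ := hsv
          have hadj' := hadj _ hs g us rfl
          have hts' : ts'.length = us.length := by rw [← e2]; simp
          obtain ⟨w, b⟩ := hadj'
          constructor <;> omega
    · rw [flip_node, flip_node]
      simp only [List.length_map, List.map_map, Function.comp_def]
      have e : ts.map (fun t => (flip t).flip) = ts.map id :=
        List.map_congr_left fun t ht => (IH t ht).2.1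
      rw [e, List.map_id]
      congr 1
      omega
    · rw [flip_node, msum_node, msum_node]
      simp only [List.length_map, List.map_map, Function.comp_def]
      have e : ts.map (fun t => (flip t).msum) = ts.map msum :=
        List.map_congr_left fun t ht => (IH t ht).2.2.1
      rw [e]
      congr 2
      have hiff : (ts.length + 1 - h = 1 ∨ ts.length + 1 - h = ts.length)
          ↔ (h = 1 ∨ h = ts.length) := by omega
      rw [if_congr hiff rfl rfl]
    · rw [flip_node, hsum_node, hsum_node, leaves_node]
      simp only [List.length_map, List.map_map, Function.comp_def]
      have e : ts.map leaves = ts.map (fun t => t.hsum + (flip t).hsum + 1) :=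
        List.map_congr_left fun t ht => ((IH t ht).2.2.2).symm
      rw [e, sum_map_add_one]
      omega
termination_by T => sizeOf T
decreasing_by
  have := List.sizeOf_lt_of_mem ht; simp only [HTree.node.sizeOf_spec]; omega

end HTree


/-- **The helicity-reversing bijection** (cf. `remark:tree-map`).  For every
`n ≥ 1` and every `k ≤ n` and `r`, the number of contracted Grassmannian
trees of type `(k, n)` with mom-dimension `r` equals the number of contracted
Grassmannian trees of type `(n − k, n)` with mom-dimension `r`.  An explicit
bijection is given by replacing each helicity `h(v)` by `d(v) − h(v)`: this
map is an involution on valid trees which preserves the number of leaves and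
the mom-dimension, and complements the helicity. -/


theorem grassmannian_tree_helicity_duality :
    (∀ n k r : ℕ, 1 ≤ n → k ≤ n →
      grassTreeCount n k r = grassTreeCount n (n - k) r) ∧
    (∀ T : HTree, T.valid →
      T.flip.valid ∧ T.flip.flip = T ∧ T.flip.leaves = T.leaves ∧
      T.flip.msum = T.msum ∧ T.hsum + T.flip.hsum = T.leaves - 1) := by
  have main : ∀ T : HTree, T.valid →
      T.flip.valid ∧ T.flip.flip = T ∧ T.flip.leaves = T.leaves ∧
      T.flip.msum = T.msum ∧ T.hsum + T.flip.hsum = T.leaves - 1 := by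
    intro T hv
    obtain ⟨v1, v2, v3, v4⟩ := HTree.flip_main T hv
    exact ⟨v1, v2, HTree.leaves_flip T, v3, by omega⟩
  refine ⟨?_, main⟩
  intro n k r h1 hk
  unfold grassTreeCount
  by_cases hn1 : n = 1
  · subst hn1; split_ifs <;> omega
  by_cases hn2 : n = 2
  · subst hn2
    simp only [if_neg (show (2:ℕ) ≠ 1 by omega)]
    split_ifs <;> omega
  simp only [if_neg hn1, if_neg hn2]
  apply Nat.card_congr
  refine ⟨fun T => ⟨T.1.flip, ?_⟩, fun T => ⟨T.1.flip, ?_⟩, ?_, ?_⟩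
  · obtain ⟨hv, hl, hk', hr'⟩ := T.2
    obtain ⟨v1, v2, v3, v4, v5⟩ := main T.1 hv
    exact ⟨v1, by omega, by omega, by omega⟩
  · obtain ⟨hv, hl, hk', hr'⟩ := T.2
    obtain ⟨v1, v2, v3, v4, v5⟩ := main T.1 hv
    exact ⟨v1, by omega, by omega, by omega⟩
  · intro T
    exact Subtype.ext (main T.1 T.2.1).2.1
  · intro T
    exact Subtype.ext (main T.1 T.2.1).2.1
end
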